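/- arXiv:1702.04529 — 2 statements merged into one kernel-verified Lean document; each statement's English description precedes it below -/
import Mathlib

section
/- For n, h, k ≥ 1, let s(n,h,k) denote the number of semi-Baxter permutations of size n with label (h,k). Then s(1,1,1) = 1 and s(1,h,k) = 0 for (h,k) ≠ (1,1), and for all n ≥ 1 and all h, k ≥ 1: s(n+1, h, k) = Σ_{h' ≥ h} s(n, h', k−1) + Σ_{m=1}^{h−1} s(n, m, h+k−1−m), where s(n, ·, 0) is interpreted as 0. (This is the recurrence on label counts encoded by the succession rule Ω_semi of Proposition 3.2, under which the label (h,k) produces the labels (1,k+1),…,(h,k+1) and (h+k,1),…,(h+1,k).) -/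
/-
Every semi-Baxter permutation of size `n + 1` is `π · a` for a unique pair of a semi-Baxter `π`
of size `n` and an active site `a` of `π`. A site `b` of `π · a` is blocked iff the corresponding
site of `π` is, or the last two entries of `π · a` can serve as the `41` of the pattern, which
happens exactly when `a + 1 < b ≤ π_n + 1`. So the active sites of `π · a` are those of `π` up
to `a`, then `a + 1`, then the active sites of `π` above `max a π_n`, shifted up by one.
If `π` has label `(h, k)` and `a` is the `r`-th of its `h + k` active sites, the child `π · a` has
label `(r, k + 1)` when `r ≤ h` and `(r, h + k + 1 - r)` otherwise; summing over `π` gives the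
recurrence.
-/

/-- `f` contains the vincular pattern 2-41-3: there are positions
`i < j` and `k > j+1` with `f (j+1) < f i < f k < f j`. -/
def Contains2413 {m : ℕ} (f : Fin m → Fin m) : Prop :=
  ∃ i j j' k : Fin m, (i : ℕ) < (j : ℕ) ∧ (j' : ℕ) = (j : ℕ) + 1 ∧ (j' : ℕ) < (k : ℕ) ∧
    f j' < f i ∧ f i < f k ∧ f k < f j

/-- A semi-Baxter permutation avoids 2-41-3. -/
def IsSemiBaxter {n : ℕ} (π : Equiv.Perm (Fin n)) : Prop := ¬ Contains2413 ⇑π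

/-- The local expansion `π · a` on the right of `π` (with 0-indexed values):
the last entry is `a`, and the entry at position `i < n` is `π i` if `π i < a`,
and `π i + 1` otherwise. -/
def insertFun {n : ℕ} (π : Equiv.Perm (Fin n)) (a : Fin (n + 1)) :
    Fin (n + 1) → Fin (n + 1) := fun i =>
  if h : (i : ℕ) < n then
    (if ((π ⟨i, h⟩ : Fin n) : ℕ) < (a : ℕ)
      then ⟨((π ⟨i, h⟩ : Fin n) : ℕ), Nat.lt_succ_of_lt (π ⟨i, h⟩).isLt⟩
      else ⟨((π ⟨i, h⟩ : Fin n) : ℕ) + 1, Nat.succ_lt_succ (π ⟨i, h⟩).isLt⟩)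
  else a

/-- Number of semi-Baxter permutations of size `n` with label `(h, k)`, where `h`
(resp. `k`) is the number of active sites weakly below (resp. strictly above)
the last entry. -/
noncomputable def semiBaxterLabelCount (n h k : ℕ) : ℕ :=
  Nat.card {π : Equiv.Perm (Fin n) // IsSemiBaxter π ∧
    ∃ hn : 0 < n,
      h = Nat.card {a : Fin (n + 1) // ¬ Contains2413 (insertFun π a) ∧
            (a : ℕ) ≤ ((π ⟨n - 1, Nat.sub_lt hn Nat.one_pos⟩ : Fin n) : ℕ)} ∧
      k = Nat.card {a : Fin (n + 1) // ¬ Contains2413 (insertFun π a) ∧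
            ((π ⟨n - 1, Nat.sub_lt hn Nat.one_pos⟩ : Fin n) : ℕ) < (a : ℕ)}}

namespace SemiBaxter

open Equiv Finset

variable {n : ℕ}

/-- In `π · a` an old value `v` becomes `shiftUp a v`; a site `b` of `π · a` lies in the
gap `shiftDown a b` of `π`. -/
def shiftUp (a v : ℕ) : ℕ := if v < a then v else v + 1

def shiftDown (a b : ℕ) : ℕ := if b ≤ a then b else b - 1

section Shift

variable {a v w b : ℕ}

lemma shiftUp_lt_shiftUp : shiftUp a v < shiftUp a w ↔ v < w := by
  unfold shiftUp; split_ifs <;> omega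

lemma shiftUp_lt_iff : shiftUp a v < b ↔ v < shiftDown a b := by
  unfold shiftUp shiftDown; split_ifs <;> omega

lemma le_shiftUp_iff : b ≤ shiftUp a v ↔ shiftDown a b ≤ v := by
  unfold shiftUp shiftDown; split_ifs <;> omega

lemma shiftUp_ne : shiftUp a v ≠ a := by
  unfold shiftUp; split_ifs <;> omega

lemma shiftUp_injective : Function.Injective (shiftUp a) :=
  StrictMono.injective fun _ _ => shiftUp_lt_shiftUp.mpr

end Shift

section Insert

variable {π : Perm (Fin n)} {a : Fin (n + 1)}

@[simp]
lemma insertFun_castSucc (x : Fin n) : (insertFun π a x.castSucc : ℕ) = shiftUp a (π x) := by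
  simp only [insertFun, Fin.val_castSucc, dif_pos x.isLt, Fin.eta, shiftUp]
  split_ifs <;> rfl

@[simp]
lemma insertFun_last : insertFun π a (Fin.last n) = a := by
  simp [insertFun]

lemma insertFun_injective (π : Perm (Fin n)) (a : Fin (n + 1)) :
    Function.Injective (insertFun π a) := by
  intro i j hij
  rcases i.eq_castSucc_or_eq_last with ⟨i, rfl⟩ | rfl <;>
    rcases j.eq_castSucc_or_eq_last with ⟨j, rfl⟩ | rfl
  · have hval := congrArg Fin.val hij
    rw [insertFun_castSucc, insertFun_castSucc] at hval
    rw [π.injective (Fin.ext (shiftUp_injective hval))]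
  · exact absurd (congrArg Fin.val hij) (by simpa using shiftUp_ne)
  · exact absurd (congrArg Fin.val hij).symm (by simpa using shiftUp_ne)
  · rfl

noncomputable def insertPerm (π : Perm (Fin n)) (a : Fin (n + 1)) : Perm (Fin (n + 1)) :=
  Equiv.ofBijective _ (Finite.injective_iff_bijective.mp (insertFun_injective π a))

@[simp]
lemma coe_insertPerm (π : Perm (Fin n)) (a : Fin (n + 1)) : ⇑(insertPerm π a) = insertFun π a :=
  rfl

@[simp]
lemma insertPerm_last (π : Perm (Fin n)) (a : Fin (n + 1)) : insertPerm π a (Fin.last n) = a :=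
  insertFun_last

lemma insertPerm_injective :
    Function.Injective fun x : Perm (Fin n) × Fin (n + 1) => insertPerm x.1 x.2 := by
  rintro ⟨π, a⟩ ⟨π', a'⟩ h
  have ha : a = a' := by simpa using congrArg (· (Fin.last n)) h
  subst ha
  refine Prod.ext (Equiv.ext fun x => Fin.ext (shiftUp_injective (a := a) ?_)) rfl
  simpa using congrArg (fun σ : Perm (Fin (n + 1)) => (σ x.castSucc : ℕ)) h

noncomputable def insertEquiv : Perm (Fin n) × Fin (n + 1) ≃ Perm (Fin (n + 1)) :=
  Equiv.ofBijective _ <| (Fintype.bijective_iff_injective_and_card _).mpr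
    ⟨insertPerm_injective, by simp [Fintype.card_perm, Nat.factorial_succ, mul_comm]⟩

end Insert

/-- Sites are 0-indexed values `b ∈ {0, …, m}`; `b` is blocked when appending it completes an
occurrence of 2-41-3 in which it plays the `3`. -/
def Blocked {m : ℕ} (f : Fin m → Fin m) (b : ℕ) : Prop :=
  ∃ i j j' : Fin m, (i : ℕ) < j ∧ (j' : ℕ) = j + 1 ∧ (f j' : ℕ) < f i ∧ (f i : ℕ) < b ∧ b ≤ f j

instance {m : ℕ} (f : Fin m → Fin m) : DecidablePred (Blocked f) := fun _ => by
  unfold Blocked; infer_instance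

instance {m : ℕ} (f : Fin m → Fin m) : Decidable (Contains2413 f) := by
  unfold Contains2413; infer_instance

instance {m : ℕ} (σ : Perm (Fin m)) : Decidable (IsSemiBaxter σ) := by
  unfold IsSemiBaxter; infer_instance

lemma exists_castSucc_eq_of_lt {i j : Fin (n + 1)} (h : (i : ℕ) < j) :
    ∃ i' : Fin n, i'.castSucc = i :=
  Fin.exists_castSucc_eq.mpr (Fin.ne_last_of_lt h)

lemma contains2413_insertFun_iff (π : Perm (Fin n)) (a : Fin (n + 1)) :
    Contains2413 (insertFun π a) ↔ Contains2413 π ∨ Blocked π a := by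
  constructor
  · rintro ⟨i, j, j', k, hij, hj', hjk, h1, h2, h3⟩
    obtain ⟨i, rfl⟩ := exists_castSucc_eq_of_lt hij
    obtain ⟨j, rfl⟩ := exists_castSucc_eq_of_lt (show (j : ℕ) < j' by omega)
    obtain ⟨j', rfl⟩ := exists_castSucc_eq_of_lt hjk
    simp only [Fin.lt_def, insertFun_castSucc] at h1 h2 h3
    rcases k.eq_castSucc_or_eq_last with ⟨k, rfl⟩ | rfl
    · simp only [insertFun_castSucc, shiftUp_lt_shiftUp] at h1 h2 h3
      exact Or.inl ⟨i, j, j', k, hij, hj', hjk, h1, h2, h3⟩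
    · simp only [insertFun_last] at h2 h3
      refine Or.inr ⟨i, j, j', hij, hj', shiftUp_lt_shiftUp.mp h1, ?_, ?_⟩ <;>
        unfold shiftUp at * <;> split_ifs at * <;> omega
  · rintro (⟨i, j, j', k, hij, hj', hjk, h1, h2, h3⟩ | ⟨i, j, j', hij, hj', h1, h2, h3⟩)
    · refine ⟨i.castSucc, j.castSucc, j'.castSucc, k.castSucc, hij, hj', hjk, ?_, ?_, ?_⟩ <;>
        simp only [Fin.lt_def, insertFun_castSucc, shiftUp_lt_shiftUp] <;> assumption
    · refine ⟨i.castSucc, j.castSucc, j'.castSucc, Fin.last n, hij, hj', j'.isLt, ?_, ?_, ?_⟩ <;>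
        simp only [Fin.lt_def, insertFun_castSucc, insertFun_last, shiftUp_lt_shiftUp] <;>
        first | assumption | (unfold shiftUp; split_ifs <;> omega)

lemma blocked_insertFun_iff (π : Perm (Fin (n + 1))) (a : Fin (n + 2)) (b : ℕ) :
    Blocked (insertFun π a) b ↔
      Blocked π (shiftDown a b) ∨ (a + 1 < b ∧ b ≤ π (Fin.last n) + 1) := by
  constructor
  · rintro ⟨i, j, j', hij, hj', h1, h2, h3⟩
    obtain ⟨i, rfl⟩ := exists_castSucc_eq_of_lt hij
    obtain ⟨j, rfl⟩ := exists_castSucc_eq_of_lt (show (j : ℕ) < j' by omega)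
    simp only [insertFun_castSucc] at h1 h2 h3
    rcases j'.eq_castSucc_or_eq_last with ⟨j', rfl⟩ | rfl
    · rw [insertFun_castSucc, shiftUp_lt_shiftUp] at h1
      exact Or.inl ⟨i, j, j', hij, hj', h1, shiftUp_lt_iff.mp h2, le_shiftUp_iff.mp h3⟩
    · obtain rfl : j = Fin.last n :=
        Fin.ext (by simp only [Fin.val_last, Fin.val_castSucc] at hj' ⊢; omega)
      rw [insertFun_last] at h1
      right
      unfold shiftUp at *; split_ifs at * <;> omega
  · rintro (⟨i, j, j', hij, hj', h1, h2, h3⟩ | ⟨hab, hbp⟩)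
    · exact ⟨i.castSucc, j.castSucc, j'.castSucc, hij, hj',
        by simpa [shiftUp_lt_shiftUp] using h1, by simpa [shiftUp_lt_iff] using h2,
        by simpa [le_shiftUp_iff] using h3⟩
    · -- the entry `a` of `π` becomes `a + 1` in `π · a` and plays the `2`
      have ha : (a : ℕ) < n + 1 := by omega
      set i := π.symm ⟨a, ha⟩
      have hπi : (π i : ℕ) = a := by simp [i]
      have hi : (i : ℕ) < n := by
        refine lt_of_le_of_ne (Nat.le_of_lt_succ i.isLt) fun hin => ?_
        rw [show i = Fin.last n from Fin.ext hin] at hπi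
        omega
      refine ⟨i.castSucc, (Fin.last n).castSucc, Fin.last (n + 1), hi, rfl, ?_, ?_, ?_⟩ <;>
        simp only [insertFun_castSucc, insertFun_last, hπi] <;>
        unfold shiftUp <;> split_ifs <;> omega

section Rank

variable {α : Type*} [LinearOrder α] {s : Finset α} {a x : α}

def rank (s : Finset α) (a : α) : ℕ := #{c ∈ s | c ≤ a}

lemma rank_le_card : rank s a ≤ #s := card_filter_le _ _

lemma one_le_rank (ha : a ∈ s) : 1 ≤ rank s a :=
  card_pos.mpr ⟨a, mem_filter.mpr ⟨ha, le_rfl⟩⟩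

lemma rank_mono (h : a ≤ x) : rank s a ≤ rank s x :=
  card_le_card (monotone_filter_right _ fun _ _ hc => le_trans hc h)

lemma rank_lt_rank (hx : x ∈ s) (h : a < x) : rank s a < rank s x := by
  refine card_lt_card ⟨monotone_filter_right _ fun _ _ hc => le_trans hc h.le, fun hsub => ?_⟩
  exact h.not_ge (mem_filter.mp (hsub (mem_filter.mpr ⟨hx, le_rfl⟩))).2

lemma card_filter_lt_eq (s : Finset α) (a : α) : #{c ∈ s | a < c} = #s - rank s a := by
  have := card_filter_add_card_filter_not (s := s) (· ≤ a)
  simp only [not_le] at this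
  rw [rank]
  omega

lemma card_filter_rank_eq (s : Finset α) (r : ℕ) :
    #{a ∈ s | rank s a = r} = if 1 ≤ r ∧ r ≤ #s then 1 else 0 := by
  have hinj : Set.InjOn (rank s) s :=
    StrictMonoOn.injOn fun a _ x hx h => rank_lt_rank hx h
  have himage : s.image (rank s) = Icc 1 #s := by
    refine eq_of_subset_of_card_le (fun r hr => ?_) ?_
    · obtain ⟨a, ha, rfl⟩ := mem_image.mp hr
      exact mem_Icc.mpr ⟨one_le_rank ha, rank_le_card⟩
    · rw [card_image_of_injOn hinj, Nat.card_Icc]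
      omega
  split_ifs with hr
  · obtain ⟨a, ha, rfl⟩ := mem_image.mp (himage ▸ mem_Icc.mpr hr)
    refine card_eq_one.mpr ⟨a, ext fun x => ?_⟩
    simp only [mem_filter, mem_singleton]
    exact ⟨fun ⟨hx, h⟩ => hinj hx ha h, by rintro rfl; exact ⟨ha, rfl⟩⟩
  · refine card_eq_zero.mpr (filter_eq_empty_iff.mpr fun a ha h => hr ?_)
    exact h ▸ ⟨one_le_rank ha, rank_le_card⟩

end Rank

lemma card_filter_fin_val {m : ℕ} {s : Finset ℕ} (hs : ∀ b ∈ s, b < m) (P : ℕ → Prop)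
    [DecidablePred P] : #{a : Fin m | (a : ℕ) ∈ s ∧ P a} = #{b ∈ s | P b} := by
  refine card_nbij (fun a => (a : ℕ)) (fun a ha => ?_) Fin.val_injective.injOn fun b hb => ?_
  · simpa using ha
  · obtain ⟨hb, hP⟩ := mem_filter.mp hb
    exact ⟨⟨b, hs b hb⟩, by simpa using ⟨hb, hP⟩, rfl⟩

section Sites

variable {m : ℕ}

def activeSites (σ : Perm (Fin m)) : Finset ℕ := {b ∈ range (m + 1) | ¬ Blocked σ b}

lemma mem_activeSites {σ : Perm (Fin m)} {b : ℕ} :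
    b ∈ activeSites σ ↔ b ≤ m ∧ ¬ Blocked σ b := by
  simp [activeSites]

lemma lt_of_mem_activeSites {σ : Perm (Fin m)} {b : ℕ} (hb : b ∈ activeSites σ) : b < m + 1 :=
  Nat.lt_succ_of_le (mem_activeSites.mp hb).1

lemma zero_mem_activeSites (σ : Perm (Fin m)) : 0 ∈ activeSites σ :=
  mem_activeSites.mpr ⟨Nat.zero_le _, fun ⟨_, _, _, _, _, _, h, _⟩ => Nat.not_lt_zero _ h⟩

lemma not_contains2413_insertFun_iff {σ : Perm (Fin m)} (hσ : IsSemiBaxter σ) (a : Fin (m + 1)) :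
    ¬ Contains2413 (insertFun σ a) ↔ (a : ℕ) ∈ activeSites σ := by
  rw [contains2413_insertFun_iff, mem_activeSites]
  unfold IsSemiBaxter at hσ
  simp only [hσ, false_or, Nat.le_of_lt_succ a.isLt, true_and]

lemma natCard_not_contains2413_insertFun {σ : Perm (Fin m)} (hσ : IsSemiBaxter σ)
    (P : ℕ → Prop) [DecidablePred P] :
    Nat.card {a : Fin (m + 1) // ¬ Contains2413 (insertFun σ a) ∧ P a} =
      #{b ∈ activeSites σ | P b} := by
  rw [Nat.card_eq_fintype_card, Fintype.card_subtype,
    ← card_filter_fin_val (fun _ => lt_of_mem_activeSites) P]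
  simp only [not_contains2413_insertFun_iff hσ]

end Sites

def lowLabel (σ : Perm (Fin (n + 1))) : ℕ := rank (activeSites σ) (σ (Fin.last n))

def highLabel (σ : Perm (Fin (n + 1))) : ℕ := #{b ∈ activeSites σ | (σ (Fin.last n) : ℕ) < b}

lemma lowLabel_add_highLabel (σ : Perm (Fin (n + 1))) :
    lowLabel σ + highLabel σ = #(activeSites σ) := by
  have := rank_le_card (s := activeSites σ) (a := (σ (Fin.last n) : ℕ))
  rw [highLabel, card_filter_lt_eq, lowLabel]
  omega

lemma one_le_lowLabel (σ : Perm (Fin (n + 1))) : 1 ≤ lowLabel σ :=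
  (rank_mono (Nat.zero_le _)).trans' (one_le_rank (zero_mem_activeSites σ))

lemma lowLabel_le (σ : Perm (Fin (n + 1))) : lowLabel σ ≤ n + 2 :=
  rank_le_card.trans ((card_filter_le _ _).trans (card_range _).le)

def labelCount (n h k : ℕ) : ℕ :=
  #{σ : Perm (Fin (n + 1)) | IsSemiBaxter σ ∧ lowLabel σ = h ∧ highLabel σ = k}

lemma semiBaxterLabelCount_succ (n h k : ℕ) :
    semiBaxterLabelCount (n + 1) h k = labelCount n h k := by
  rw [semiBaxterLabelCount, Nat.card_eq_fintype_card, Fintype.card_subtype, labelCount]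
  refine congrArg card (filter_congr fun σ _ => and_congr_right fun hσ => ?_)
  have hlow := natCard_not_contains2413_insertFun hσ (· ≤ (σ (Fin.last n) : ℕ))
  have hhigh := natCard_not_contains2413_insertFun hσ ((σ (Fin.last n) : ℕ) < ·)
  exact ⟨fun ⟨_, hh, hk⟩ => ⟨(hh.trans hlow).symm, (hk.trans hhigh).symm⟩,
    fun ⟨hh, hk⟩ => ⟨n.succ_pos, (hlow.trans hh).symm, (hhigh.trans hk).symm⟩⟩

section Children

lemma isSemiBaxter_insertPerm_iff {m : ℕ} (π : Perm (Fin m)) (a : Fin (m + 1)) :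
    IsSemiBaxter (insertPerm π a) ↔ IsSemiBaxter π ∧ (a : ℕ) ∈ activeSites π := by
  rw [IsSemiBaxter, IsSemiBaxter, coe_insertPerm, contains2413_insertFun_iff, mem_activeSites,
    not_or]
  simp only [Nat.le_of_lt_succ a.isLt, true_and]

variable {π : Perm (Fin (n + 1))} {a : Fin (n + 2)} {b : ℕ}

lemma mem_activeSites_insertPerm_of_le (hb : b ≤ a) :
    b ∈ activeSites (insertPerm π a) ↔ b ∈ activeSites π := by
  have := a.isLt
  rw [mem_activeSites, mem_activeSites, coe_insertPerm, blocked_insertFun_iff, shiftDown,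
    if_pos hb]
  simp only [show ¬ ((a : ℕ) + 1 < b) by omega, false_and, or_false]
  exact and_congr_left fun _ => by omega

lemma succ_mem_activeSites_insertPerm (ha : (a : ℕ) ∈ activeSites π) :
    (a : ℕ) + 1 ∈ activeSites (insertPerm π a) := by
  rw [mem_activeSites] at ha ⊢
  rw [coe_insertPerm, blocked_insertFun_iff, shiftDown, if_neg (by omega), Nat.add_sub_cancel]
  exact ⟨by omega, by rintro (h | h); exacts [ha.2 h, by omega]⟩

lemma mem_activeSites_insertPerm_of_lt (hb : (a : ℕ) + 1 < b) :
    b ∈ activeSites (insertPerm π a) ↔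
      max (a : ℕ) (π (Fin.last n) : ℕ) + 1 < b ∧ b - 1 ∈ activeSites π := by
  rw [mem_activeSites, mem_activeSites, coe_insertPerm, blocked_insertFun_iff, shiftDown,
    if_neg (by omega)]
  simp only [hb, true_and, not_or, not_le]
  constructor
  · rintro ⟨h1, h2, h3⟩; exact ⟨by omega, by omega, h2⟩
  · rintro ⟨h1, h2, h3⟩; exact ⟨by omega, h3, by omega⟩

lemma lowLabel_insertPerm : lowLabel (insertPerm π a) = rank (activeSites π) a := by
  unfold lowLabel rank
  rw [insertPerm_last]
  congr 1
  ext b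
  simp only [mem_filter]
  exact ⟨fun ⟨h1, h2⟩ => ⟨(mem_activeSites_insertPerm_of_le h2).mp h1, h2⟩,
    fun ⟨h1, h2⟩ => ⟨(mem_activeSites_insertPerm_of_le h2).mpr h1, h2⟩⟩

lemma highLabel_insertPerm (ha : (a : ℕ) ∈ activeSites π) :
    highLabel (insertPerm π a) =
      #{c ∈ activeSites π | max (a : ℕ) (π (Fin.last n) : ℕ) < c} + 1 := by
  have hsites : {b ∈ activeSites (insertPerm π a) | (a : ℕ) < b} =
      insert ((a : ℕ) + 1)
        ({c ∈ activeSites π | max (a : ℕ) (π (Fin.last n) : ℕ) < c}.image (· + 1)) := by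
    ext b
    simp only [mem_filter, mem_insert, mem_image]
    constructor
    · rintro ⟨hb, hab⟩
      rcases (show b = a + 1 ∨ (a : ℕ) + 1 < b by omega) with rfl | hlt
      · exact Or.inl rfl
      · obtain ⟨hmax, hb'⟩ := (mem_activeSites_insertPerm_of_lt hlt).mp hb
        exact Or.inr ⟨b - 1, ⟨hb', by omega⟩, by omega⟩
    · rintro (rfl | ⟨c, ⟨hc, hmax⟩, rfl⟩)
      · exact ⟨succ_mem_activeSites_insertPerm ha, by omega⟩
      · refine ⟨(mem_activeSites_insertPerm_of_lt (by omega)).mpr ⟨by omega, ?_⟩, by omega⟩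
        simpa using hc
  rw [highLabel, insertPerm_last, hsites, card_insert_of_notMem, card_image_of_injective _
    (add_left_injective 1)]
  simp only [mem_image, mem_filter, not_exists, not_and]
  intro c _ hc
  omega

/-- A permutation of label `(p, q)` has one child of each label `(1, q + 1), …, (p, q + 1)`,
`(p + 1, q), …, (p + q, 1)`, and no other children. -/
lemma card_children_eq (π : Perm (Fin (n + 1))) (h k : ℕ) :
    #{a : Fin (n + 2) | (a : ℕ) ∈ activeSites π ∧ lowLabel (insertPerm π a) = h ∧
        highLabel (insertPerm π a) = k} =
      if 1 ≤ h ∧ h ≤ lowLabel π + highLabel π ∧ (h ≤ lowLabel π → k = highLabel π + 1) ∧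
        (lowLabel π < h → h + k = lowLabel π + highLabel π + 1) then 1 else 0 := by
  have hA := lowLabel_add_highLabel π
  set P := (h ≤ lowLabel π → k = highLabel π + 1) ∧
    (lowLabel π < h → h + k = lowLabel π + highLabel π + 1)
  have hlabels : ∀ a : Fin (n + 2), (a : ℕ) ∈ activeSites π →
      (lowLabel (insertPerm π a) = h ∧ highLabel (insertPerm π a) = k ↔
        rank (activeSites π) a = h ∧ P) := by
    intro a ha
    rw [lowLabel_insertPerm, highLabel_insertPerm ha]
    have := rank_le_card (s := activeSites π) (a := (a : ℕ))
    rcases le_or_gt (a : ℕ) (π (Fin.last n)) with hap | hpa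
    · have : rank (activeSites π) a ≤ lowLabel π := rank_mono hap
      rw [max_eq_right hap]
      change _ ∧ highLabel π + 1 = k ↔ _
      omega
    · have : lowLabel π < rank (activeSites π) a := rank_lt_rank ha hpa
      rw [max_eq_left hpa.le, card_filter_lt_eq]
      omega
  rw [filter_congr fun a _ => and_congr_right (hlabels a),
    card_filter_fin_val (fun _ => lt_of_mem_activeSites)
      (fun b => rank (activeSites π) b = h ∧ P)]
  by_cases hP : P
  · simp only [hP, and_true]
    rw [card_filter_rank_eq, ← hA]
    exact if_congr ⟨fun hh => ⟨hh.1, hh.2, hP⟩, fun hh => ⟨hh.1, hh.2.1⟩⟩ rfl rfl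
  · simp only [hP, and_false, filter_false, card_empty]
    exact (if_neg fun hh => hP hh.2.2).symm

end Children

lemma labelCount_succ_eq_card (n h k : ℕ) :
    labelCount (n + 1) h k =
      #{π : Perm (Fin (n + 1)) | IsSemiBaxter π ∧ 1 ≤ h ∧ h ≤ lowLabel π + highLabel π ∧
        (h ≤ lowLabel π → k = highLabel π + 1) ∧
        (lowLabel π < h → h + k = lowLabel π + highLabel π + 1)} := by
  rw [labelCount, card_filter, ← insertEquiv.sum_comp, Fintype.sum_prod_type, card_filter]
  refine sum_congr rfl fun π _ => ?_
  simp only [insertEquiv, Equiv.ofBijective_apply, isSemiBaxter_insertPerm_iff, and_assoc]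
  by_cases hπ : IsSemiBaxter π
  · simp only [hπ, true_and]
    rw [← card_filter, card_children_eq]
  · simp [hπ]

lemma sum_labelCount_eq_card (s : Finset ℕ) (g : ℕ → ℕ) :
    ∑ m ∈ s, labelCount n m (g m) =
      #{π : Perm (Fin (n + 1)) | IsSemiBaxter π ∧ lowLabel π ∈ s ∧
        highLabel π = g (lowLabel π)} := by
  rw [card_eq_sum_card_fiberwise fun π hπ => (mem_filter.mp hπ).2.2.1]
  refine sum_congr rfl fun m hm => ?_
  rw [labelCount, filter_filter]
  refine congrArg card (filter_congr fun π _ => ⟨?_, ?_⟩)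
  · rintro ⟨hπ, rfl, hk⟩
    exact ⟨⟨hπ, hm, hk⟩, rfl⟩
  · rintro ⟨⟨hπ, -, hk⟩, rfl⟩
    exact ⟨hπ, rfl, hk⟩

lemma labelCount_succ {h k : ℕ} (hh : 1 ≤ h) (hk : 1 ≤ k) :
    labelCount (n + 1) h k =
      ∑ h' ∈ Icc h (n + 2), labelCount n h' (k - 1) +
        ∑ m ∈ Ico 1 h, labelCount n m (h + k - 1 - m) := by
  rw [labelCount_succ_eq_card, sum_labelCount_eq_card, sum_labelCount_eq_card, card_filter,
    card_filter, card_filter, ← sum_add_distrib]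
  refine sum_congr rfl fun π _ => ?_
  have := one_le_lowLabel π
  have := lowLabel_le π
  by_cases hπ : IsSemiBaxter π
  · simp only [hπ, true_and, mem_Icc, mem_Ico]
    split_ifs <;> omega
  · simp [hπ]

lemma labelCount_eq_zero_of_lt {h : ℕ} (k : ℕ) (hh : n + 2 < h) : labelCount n h k = 0 :=
  card_eq_zero.mpr (filter_eq_empty_iff.mpr fun π _ ⟨_, hπ, _⟩ => (lowLabel_le π).not_gt (hπ ▸ hh))

lemma labelCount_zero (h k : ℕ) : labelCount 0 h k = if h = 1 ∧ k = 1 then 1 else 0 := by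
  have hsites : ∀ σ : Perm (Fin 1), activeSites σ = range 2 := fun σ => by
    ext b
    simp only [mem_activeSites, mem_range]
    refine ⟨fun hb => by omega, fun hb => ⟨by omega, ?_⟩⟩
    rintro ⟨i, j, -, hij, -⟩
    omega
  have hlabel : ∀ σ : Perm (Fin 1), IsSemiBaxter σ ∧ lowLabel σ = 1 ∧ highLabel σ = 1 := fun σ =>
    ⟨fun ⟨i, j, _, _, hij, _⟩ => by omega, by simp [lowLabel, rank, hsites],
      by simp [highLabel, hsites]; rfl⟩
  simp only [labelCount, hlabel, true_and]
  split_ifs with hhk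
  · obtain ⟨rfl, rfl⟩ := hhk
    simp
  · exact card_eq_zero.mpr (filter_eq_empty_iff.mpr fun _ _ hσ => hhk ⟨hσ.1.symm, hσ.2.symm⟩)

end SemiBaxter

/-- The recurrence on label counts encoded by the succession rule `Ω_semi`
(Proposition 3.2): the label `(h,k)` produces `(1,k+1),…,(h,k+1)` and
`(h+k,1),…,(h+1,k)`. -/
theorem semiBaxter_omega_semi :
    semiBaxterLabelCount 1 1 1 = 1 ∧
    (∀ h k : ℕ, 1 ≤ h → 1 ≤ k → (h, k) ≠ (1, 1) → semiBaxterLabelCount 1 h k = 0) ∧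
    (∀ n h k : ℕ, 1 ≤ n → 1 ≤ h → 1 ≤ k →
      semiBaxterLabelCount (n + 1) h k =
        (∑' h' : ℕ, if h ≤ h' then semiBaxterLabelCount n h' (k - 1) else 0) +
          ∑ m ∈ Finset.Ico 1 h, semiBaxterLabelCount n m (h + k - 1 - m)) := by
  simp only [SemiBaxter.semiBaxterLabelCount_succ 0, SemiBaxter.labelCount_zero]
  refine ⟨rfl, fun h k _ _ hne => if_neg fun ⟨hh, hk⟩ => hne (by rw [hh, hk]), ?_⟩
  intro n h k hn hh hk
  obtain ⟨n, rfl⟩ := Nat.exists_eq_add_of_le' hn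
  have hsupp : ∀ h' ∉ Finset.Icc h (n + 2),
      (if h ≤ h' then semiBaxterLabelCount (n + 1) h' (k - 1) else 0) = 0 := fun h' hh' => by
    rw [Finset.mem_Icc] at hh'
    split_ifs with hle
    · rw [SemiBaxter.semiBaxterLabelCount_succ,
        SemiBaxter.labelCount_eq_zero_of_lt _ (by omega)]
    · rfl
  rw [tsum_eq_sum hsupp, Finset.sum_congr rfl fun h' hh' => if_pos (Finset.mem_Icc.mp hh').1]
  simp only [SemiBaxter.semiBaxterLabelCount_succ]
  exact SemiBaxter.labelCount_succ hh hk
end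

section
/- For all n, h, k ≥ 1, the number of semi-Baxter permutations of size n with label (h,k) equals the number of plane permutations of size n with label (h,k). (Refined equinumerosity underlying Corollary 3.4: the generating trees of semi-Baxter and plane permutations encoded by Ω_semi are isomorphic.) -/
/-- `f` contains the vincular pattern 2-14-3. -/
def Contains2143 {m : ℕ} (f : Fin m → Fin m) : Prop :=
  ∃ i j j' k : Fin m, (i : ℕ) < (j : ℕ) ∧ (j' : ℕ) = (j : ℕ) + 1 ∧ (j' : ℕ) < (k : ℕ) ∧
    f j < f i ∧ f i < f k ∧ f k < f j'

/-- A plane permutation avoids 2-14-3. -/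
def IsPlane {n : ℕ} (π : Equiv.Perm (Fin n)) : Prop := ¬ Contains2143 ⇑π

namespace SBP
variable {n : ℕ}

@[simp] lemma mkval {m v : ℕ} (h : v < m) : ((⟨v, h⟩ : Fin m) : ℕ) = v := rfl

lemma insertFun_castSucc_val (π : Equiv.Perm (Fin n)) (a : Fin (n+1)) (i : Fin n) :
    ((insertFun π a i.castSucc : Fin (n+1)) : ℕ) =
      if ((π i : Fin n) : ℕ) < (a : ℕ) then (π i : ℕ) else (π i : ℕ) + 1 := by
  have h : ((i.castSucc : Fin (n+1)) : ℕ) < n := i.isLt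
  have e : (⟨((i.castSucc : Fin (n+1)) : ℕ), h⟩ : Fin n) = i := by ext; simp
  simp only [insertFun, dif_pos h, e]
  split <;> simp

lemma insertFun_last (π : Equiv.Perm (Fin n)) (a : Fin (n+1)) :
    insertFun π a (Fin.last n) = a := by
  simp [insertFun]

lemma ins_lt_ins (π : Equiv.Perm (Fin n)) (a : Fin (n+1)) (i j : Fin n) :
    insertFun π a i.castSucc < insertFun π a j.castSucc ↔ π i < π j := by
  rw [Fin.lt_def, Fin.lt_def, insertFun_castSucc_val, insertFun_castSucc_val]
  have := (π i).isLt; have := (π j).isLt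
  constructor
  · intro h; split at h <;> split at h <;> omega
  · intro h; split <;> split <;> omega

lemma ins_lt_last (π : Equiv.Perm (Fin n)) (a : Fin (n+1)) (i : Fin n) :
    insertFun π a i.castSucc < insertFun π a (Fin.last n) ↔ ((π i : Fin n) : ℕ) < (a : ℕ) := by
  rw [Fin.lt_def, insertFun_castSucc_val, insertFun_last]
  constructor
  · intro h; split at h <;> omega
  · intro h; split <;> omega

lemma last_lt_ins (π : Equiv.Perm (Fin n)) (a : Fin (n+1)) (i : Fin n) :
    insertFun π a (Fin.last n) < insertFun π a i.castSucc ↔ (a : ℕ) ≤ ((π i : Fin n) : ℕ) := by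
  rw [Fin.lt_def, insertFun_castSucc_val, insertFun_last]
  constructor
  · intro h; split at h <;> omega
  · intro h; split <;> omega

def BadSB (π : Equiv.Perm (Fin n)) (a : Fin (n+1)) : Prop :=
  ∃ i j j' : Fin n, (i : ℕ) < (j : ℕ) ∧ (j' : ℕ) = (j : ℕ) + 1 ∧
    (π j' : ℕ) < (π i : ℕ) ∧ (π i : ℕ) < (a : ℕ) ∧ (a : ℕ) ≤ (π j : ℕ)

lemma contains2413_insert_iff (π : Equiv.Perm (Fin n)) (a : Fin (n+1)) :
    Contains2413 (insertFun π a) ↔ Contains2413 ⇑π ∨ BadSB π a := by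
  constructor
  · rintro ⟨i, j, j', k, hij, hj', hj'k, h1, h2, h3⟩
    have hkn : (k : ℕ) ≤ n := Nat.lt_succ_iff.mp k.isLt
    have hi : (i : ℕ) < n := by omega
    have hj : (j : ℕ) < n := by omega
    have hjn' : (j' : ℕ) < n := by omega
    have ei : i = (⟨(i : ℕ), hi⟩ : Fin n).castSucc := by ext; simp
    have ej : j = (⟨(j : ℕ), hj⟩ : Fin n).castSucc := by ext; simp
    have ej' : j' = (⟨(j' : ℕ), hjn'⟩ : Fin n).castSucc := by ext; simp
    rw [ei] at h1 h2; rw [ej] at h3; rw [ej'] at h1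
    rcases Nat.lt_or_ge (k : ℕ) n with hk | hk
    · have ek : k = (⟨(k : ℕ), hk⟩ : Fin n).castSucc := by ext; simp
      rw [ek] at h2 h3
      rw [ins_lt_ins] at h1 h2 h3
      exact Or.inl ⟨_, _, _, _, hij, hj', hj'k, h1, h2, h3⟩
    · have ek : k = Fin.last n := by ext; simp; omega
      rw [ek] at h2 h3
      rw [ins_lt_ins] at h1
      rw [ins_lt_last] at h2
      rw [last_lt_ins] at h3
      exact Or.inr ⟨_, _, _, hij, hj', Fin.lt_def.mp h1, h2, h3⟩
  · rintro (⟨i, j, j', k, hij, hj', hj'k, h1, h2, h3⟩ | ⟨i, j, j', hij, hj', h1, h2, h3⟩)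
    · exact ⟨i.castSucc, j.castSucc, j'.castSucc, k.castSucc, by simpa, by simpa, by simpa,
        (ins_lt_ins π a _ _).mpr h1, (ins_lt_ins π a _ _).mpr h2, (ins_lt_ins π a _ _).mpr h3⟩
    · refine ⟨i.castSucc, j.castSucc, j'.castSucc, Fin.last n, by simpa, by simpa,
        by simp,
        (ins_lt_ins π a _ _).mpr (Fin.lt_def.mpr h1), (ins_lt_last π a _).mpr h2,
        (last_lt_ins π a _).mpr h3⟩


def BadPL (π : Equiv.Perm (Fin n)) (a : Fin (n+1)) : Prop :=
  ∃ i j j' : Fin n, (i : ℕ) < (j : ℕ) ∧ (j' : ℕ) = (j : ℕ) + 1 ∧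
    (π j : ℕ) < (π i : ℕ) ∧ (π i : ℕ) < (a : ℕ) ∧ (a : ℕ) ≤ (π j' : ℕ)

instance (π : Equiv.Perm (Fin n)) (a : Fin (n+1)) : Decidable (BadSB π a) := by
  unfold BadSB; infer_instance

instance (π : Equiv.Perm (Fin n)) (a : Fin (n+1)) : Decidable (BadPL π a) := by
  unfold BadPL; infer_instance

instance {m : ℕ} (f : Fin m → Fin m) : Decidable (Contains2413 f) := by
  unfold Contains2413; infer_instance

instance {m : ℕ} (f : Fin m → Fin m) : Decidable (Contains2143 f) := by
  unfold Contains2143; infer_instance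

lemma contains2143_insert_iff (π : Equiv.Perm (Fin n)) (a : Fin (n+1)) :
    Contains2143 (insertFun π a) ↔ Contains2143 ⇑π ∨ BadPL π a := by
  constructor
  · rintro ⟨i, j, j', k, hij, hj', hj'k, h1, h2, h3⟩
    have hkn : (k : ℕ) ≤ n := Nat.lt_succ_iff.mp k.isLt
    have hi : (i : ℕ) < n := by omega
    have hj : (j : ℕ) < n := by omega
    have hjn' : (j' : ℕ) < n := by omega
    have ei : i = (⟨(i : ℕ), hi⟩ : Fin n).castSucc := by ext; simp
    have ej : j = (⟨(j : ℕ), hj⟩ : Fin n).castSucc := by ext; simp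
    have ej' : j' = (⟨(j' : ℕ), hjn'⟩ : Fin n).castSucc := by ext; simp
    rw [ei] at h1 h2; rw [ej] at h1; rw [ej'] at h3
    rcases Nat.lt_or_ge (k : ℕ) n with hk | hk
    · have ek : k = (⟨(k : ℕ), hk⟩ : Fin n).castSucc := by ext; simp
      rw [ek] at h2 h3
      rw [ins_lt_ins] at h1 h2 h3
      exact Or.inl ⟨_, _, _, _, hij, hj', hj'k, h1, h2, h3⟩
    · have ek : k = Fin.last n := by ext; simp; omega
      rw [ek] at h2 h3
      rw [ins_lt_ins] at h1
      rw [ins_lt_last] at h2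
      rw [last_lt_ins] at h3
      exact Or.inr ⟨_, _, _, hij, hj', Fin.lt_def.mp h1, h2, h3⟩
  · rintro (⟨i, j, j', k, hij, hj', hj'k, h1, h2, h3⟩ | ⟨i, j, j', hij, hj', h1, h2, h3⟩)
    · exact ⟨i.castSucc, j.castSucc, j'.castSucc, k.castSucc, by simpa, by simpa, by simpa,
        (ins_lt_ins π a _ _).mpr h1, (ins_lt_ins π a _ _).mpr h2, (ins_lt_ins π a _ _).mpr h3⟩
    · refine ⟨i.castSucc, j.castSucc, j'.castSucc, Fin.last n, by simpa, by simpa,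
        by simp,
        (ins_lt_ins π a _ _).mpr (Fin.lt_def.mpr h1), (ins_lt_last π a _).mpr h2,
        (last_lt_ins π a _).mpr h3⟩

lemma insertFun_injective (π : Equiv.Perm (Fin n)) (a : Fin (n+1)) :
    Function.Injective (insertFun π a) := by
  intro x y hxy
  induction x using Fin.lastCases with
  | last =>
    induction y using Fin.lastCases with
    | last => rfl
    | cast j =>
      exfalso
      have h := congrArg (fun z : Fin (n+1) => (z : ℕ)) hxy
      simp only [insertFun_last, insertFun_castSucc_val] at h
      split at h <;> omega
  | cast i =>
    induction y using Fin.lastCases with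
    | last =>
      exfalso
      have h := congrArg (fun z : Fin (n+1) => (z : ℕ)) hxy
      simp only [insertFun_last, insertFun_castSucc_val] at h
      split at h <;> omega
    | cast j =>
      have h := congrArg (fun z : Fin (n+1) => (z : ℕ)) hxy
      simp only [insertFun_castSucc_val] at h
      have hij : (π i : ℕ) = (π j : ℕ) := by split at h <;> split at h <;> omega
      have : π i = π j := Fin.ext hij
      rw [π.injective this]

noncomputable def insertPerm (π : Equiv.Perm (Fin n)) (a : Fin (n+1)) :
    Equiv.Perm (Fin (n+1)) :=
  Equiv.ofBijective _ (Finite.injective_iff_bijective.mp (insertFun_injective π a))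

lemma insertPerm_coe (π : Equiv.Perm (Fin n)) (a : Fin (n+1)) :
    ⇑(insertPerm π a) = insertFun π a := rfl

lemma castSucc_ne_last' (σ : Equiv.Perm (Fin (n+1))) (i : Fin n) :
    (σ i.castSucc : ℕ) ≠ (σ (Fin.last n) : ℕ) := by
  intro h
  have h2 : i.castSucc = Fin.last n := σ.injective (Fin.ext h)
  have h3 : (i : ℕ) = n := by
    have := congrArg (fun z : Fin (n+1) => (z : ℕ)) h2
    simpa using this
  have := i.isLt
  omega

def delFun (σ : Equiv.Perm (Fin (n+1))) : Fin n → Fin n := fun i =>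
  if h : (σ i.castSucc : ℕ) < (σ (Fin.last n) : ℕ) then
    ⟨(σ i.castSucc : ℕ), by have h2 := (σ (Fin.last n)).isLt; omega⟩
  else ⟨(σ i.castSucc : ℕ) - 1, by
    have h1 := (σ i.castSucc).isLt; have h3 := i.isLt; omega⟩

lemma delFun_val (σ : Equiv.Perm (Fin (n+1))) (i : Fin n) :
    ((delFun σ i : Fin n) : ℕ) =
      if (σ i.castSucc : ℕ) < (σ (Fin.last n) : ℕ) then (σ i.castSucc : ℕ)
      else (σ i.castSucc : ℕ) - 1 := by
  simp only [delFun]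
  split <;> rfl

lemma delFun_injective (σ : Equiv.Perm (Fin (n+1))) : Function.Injective (delFun σ) := by
  intro x y hxy
  have hx := castSucc_ne_last' σ x
  have hy := castSucc_ne_last' σ y
  have h := congrArg (fun z : Fin n => (z : ℕ)) hxy
  simp only [delFun_val] at h
  have hval : (σ x.castSucc : ℕ) = (σ y.castSucc : ℕ) := by
    split at h <;> split at h <;> omega
  have : x.castSucc = y.castSucc := σ.injective (Fin.ext hval)
  exact Fin.castSucc_injective n this

noncomputable def deletePerm (σ : Equiv.Perm (Fin (n+1))) : Equiv.Perm (Fin n) :=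
  Equiv.ofBijective _ (Finite.injective_iff_bijective.mp (delFun_injective σ))

lemma deletePerm_coe (σ : Equiv.Perm (Fin (n+1))) : ⇑(deletePerm σ) = delFun σ := rfl

lemma insert_delete (σ : Equiv.Perm (Fin (n+1))) :
    insertFun (deletePerm σ) (σ (Fin.last n)) = ⇑σ := by
  funext x
  induction x using Fin.lastCases with
  | last => rw [insertFun_last]
  | cast i =>
    apply Fin.ext
    rw [insertFun_castSucc_val]
    have hne := castSucc_ne_last' σ i
    have h1 := (σ i.castSucc).isLt
    rw [deletePerm_coe, delFun_val]
    split_ifs <;> omega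

lemma delete_insert (π : Equiv.Perm (Fin n)) (a : Fin (n+1)) :
    deletePerm (insertPerm π a) = π := by
  apply Equiv.ext; intro i
  apply Fin.ext
  rw [deletePerm_coe, delFun_val, insertPerm_coe, insertFun_last, insertFun_castSucc_val]
  have := (π i).isLt
  split_ifs <;> omega

lemma insertPerm_last (π : Equiv.Perm (Fin n)) (a : Fin (n+1)) :
    insertPerm π a (Fin.last n) = a := insertFun_last π a

lemma perm_val_ne (π : Equiv.Perm (Fin n)) {x y : Fin n} (h : x ≠ y) :
    (π x : ℕ) ≠ (π y : ℕ) := fun he => h (π.injective (Fin.ext he))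

def unshift {m : ℕ} (a : Fin (m+1)) (b : Fin (m+2)) : Fin (m+1) :=
  if h : (b : ℕ) ≤ (a : ℕ) then ⟨(b : ℕ), by have := a.isLt; omega⟩
  else ⟨(b : ℕ) - 1, by have := b.isLt; omega⟩

lemma unshift_val {m : ℕ} (a : Fin (m+1)) (b : Fin (m+2)) :
    ((unshift a b : Fin (m+1)) : ℕ) = if (b : ℕ) ≤ (a : ℕ) then (b : ℕ) else (b : ℕ) - 1 := by
  simp only [unshift]; split <;> rfl

lemma badSB_insert_iff (π : Equiv.Perm (Fin (n+1))) (a : Fin (n+2)) (b : Fin (n+3)) :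
    BadSB (insertPerm π a) b ↔
      BadSB π (unshift a b) ∨
        ((a : ℕ) + 1 < (b : ℕ) ∧ (b : ℕ) ≤ (π (Fin.last n) : ℕ) + 1) := by
  constructor
  · rintro ⟨i, j, j', hij, hj', h1, h2, h3⟩
    have hjn' : (j' : ℕ) ≤ n + 1 := Nat.lt_succ_iff.mp j'.isLt
    have hi : (i : ℕ) < n + 1 := by omega
    have hj : (j : ℕ) < n + 1 := by omega
    have ei : i = (⟨(i : ℕ), hi⟩ : Fin (n+1)).castSucc := by ext; simp
    have ej : j = (⟨(j : ℕ), hj⟩ : Fin (n+1)).castSucc := by ext; simp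
    rw [insertPerm_coe] at h1 h2 h3
    rw [ei] at h1 h2; rw [ej] at h3
    rw [insertFun_castSucc_val] at h2 h3
    rcases Nat.lt_or_ge (j' : ℕ) (n+1) with hk | hk
    · have ej' : j' = (⟨(j' : ℕ), hk⟩ : Fin (n+1)).castSucc := by ext; simp
      rw [ej', insertFun_castSucc_val, insertFun_castSucc_val] at h1
      left
      refine ⟨⟨(i : ℕ), hi⟩, ⟨(j : ℕ), hj⟩, ⟨(j' : ℕ), hk⟩, by simpa using hij,
        by simpa using hj', ?_, ?_, ?_⟩
      · revert h1; split_ifs <;> intro h1 <;> omega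
      · rw [unshift_val]; revert h1 h2; split_ifs <;> intro h1 h2 <;> omega
      · rw [unshift_val]; revert h1 h2 h3; split_ifs <;> intro h1 h2 h3 <;> omega
    · have ej' : j' = Fin.last (n+1) := by ext; simp; omega
      have ejlast : (⟨(j : ℕ), hj⟩ : Fin (n+1)) = Fin.last n := by ext; simp; omega
      rw [ej', insertFun_last, insertFun_castSucc_val] at h1
      rw [ejlast] at h3
      right
      have hne : (π ⟨(i : ℕ), hi⟩ : ℕ) ≠ (π (Fin.last n) : ℕ) := by
        apply perm_val_ne
        intro he
        have := congrArg (fun z : Fin (n+1) => (z : ℕ)) he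
        simp at this; omega
      revert h1 h2 h3; split_ifs <;> intro h1 h2 h3 <;> omega
  · rintro (⟨i, j, j', hij, hj', h1, h2, h3⟩ | ⟨hz1, hz2⟩)
    · rw [unshift_val] at h2 h3
      refine ⟨i.castSucc, j.castSucc, j'.castSucc, by simpa, by simpa, ?_, ?_, ?_⟩
      · rw [insertPerm_coe, insertFun_castSucc_val, insertFun_castSucc_val]
        split_ifs <;> omega
      · rw [insertPerm_coe, insertFun_castSucc_val]
        revert h2; split_ifs <;> intro h2 <;> omega
      · rw [insertPerm_coe, insertFun_castSucc_val]
        revert h3; split_ifs <;> intro h3 <;> omega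
    · have hap : (a : ℕ) < (π (Fin.last n) : ℕ) := by omega
      have haval : (a : ℕ) < n + 1 := by have := (π (Fin.last n)).isLt; omega
      have hqval : (π (π.symm ⟨(a : ℕ), haval⟩) : ℕ) = (a : ℕ) := by
        rw [Equiv.apply_symm_apply]
      have hqne : π.symm ⟨(a : ℕ), haval⟩ ≠ Fin.last n := by
        intro he; rw [he] at hqval; omega
      have hqlt : ((π.symm ⟨(a : ℕ), haval⟩ : Fin (n+1)) : ℕ) < n := by
        have h4 := Nat.lt_succ_iff.mp (π.symm ⟨(a : ℕ), haval⟩).isLt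
        rcases Nat.lt_or_ge ((π.symm ⟨(a : ℕ), haval⟩ : Fin (n+1)) : ℕ) n with h | h
        · exact h
        · exact absurd (Fin.ext (by simp only [Fin.val_last]; omega)) hqne
      refine ⟨(π.symm ⟨(a : ℕ), haval⟩).castSucc, (Fin.last n).castSucc, Fin.last (n+1),
        by simpa using hqlt, by simp, ?_, ?_, ?_⟩
      · rw [insertPerm_coe, insertFun_last, insertFun_castSucc_val, hqval]
        split_ifs <;> omega
      · rw [insertPerm_coe, insertFun_castSucc_val, hqval]
        split_ifs <;> omega
      · rw [insertPerm_coe, insertFun_castSucc_val]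
        split_ifs <;> omega

lemma badPL_insert_iff (π : Equiv.Perm (Fin (n+1))) (a : Fin (n+2)) (b : Fin (n+3)) :
    BadPL (insertPerm π a) b ↔
      BadPL π (unshift a b) ∨
        ((π (Fin.last n) : ℕ) + 1 < (b : ℕ) ∧ (b : ℕ) ≤ (a : ℕ)) := by
  constructor
  · rintro ⟨i, j, j', hij, hj', h1, h2, h3⟩
    have hjn' : (j' : ℕ) ≤ n + 1 := Nat.lt_succ_iff.mp j'.isLt
    have hi : (i : ℕ) < n + 1 := by omega
    have hj : (j : ℕ) < n + 1 := by omega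
    have ei : i = (⟨(i : ℕ), hi⟩ : Fin (n+1)).castSucc := by ext; simp
    have ej : j = (⟨(j : ℕ), hj⟩ : Fin (n+1)).castSucc := by ext; simp
    rw [insertPerm_coe] at h1 h2 h3
    rw [ei] at h1 h2; rw [ej] at h1
    rw [insertFun_castSucc_val, insertFun_castSucc_val] at h1
    rw [insertFun_castSucc_val] at h2
    rcases Nat.lt_or_ge (j' : ℕ) (n+1) with hk | hk
    · have ej' : j' = (⟨(j' : ℕ), hk⟩ : Fin (n+1)).castSucc := by ext; simp
      rw [ej', insertFun_castSucc_val] at h3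
      left
      refine ⟨⟨(i : ℕ), hi⟩, ⟨(j : ℕ), hj⟩, ⟨(j' : ℕ), hk⟩, by simpa using hij,
        by simpa using hj', ?_, ?_, ?_⟩
      · revert h1; split_ifs <;> intro h1 <;> omega
      · rw [unshift_val]; revert h1 h2; split_ifs <;> intro h1 h2 <;> omega
      · rw [unshift_val]; revert h1 h2 h3; split_ifs <;> intro h1 h2 h3 <;> omega
    · have ej' : j' = Fin.last (n+1) := by ext; simp; omega
      have ejlast : (⟨(j : ℕ), hj⟩ : Fin (n+1)) = Fin.last n := by ext; simp; omega
      rw [ej', insertFun_last] at h3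
      rw [ejlast] at h1
      right
      have hne : (π ⟨(i : ℕ), hi⟩ : ℕ) ≠ (π (Fin.last n) : ℕ) := by
        apply perm_val_ne
        intro he
        have := congrArg (fun z : Fin (n+1) => (z : ℕ)) he
        simp at this; omega
      revert h1 h2 h3; split_ifs <;> intro h1 h2 h3 <;> omega
  · rintro (⟨i, j, j', hij, hj', h1, h2, h3⟩ | ⟨hz1, hz2⟩)
    · rw [unshift_val] at h2 h3
      refine ⟨i.castSucc, j.castSucc, j'.castSucc, by simpa, by simpa, ?_, ?_, ?_⟩
      · rw [insertPerm_coe, insertFun_castSucc_val, insertFun_castSucc_val]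
        split_ifs <;> omega
      · rw [insertPerm_coe, insertFun_castSucc_val]
        revert h2; split_ifs <;> intro h2 <;> omega
      · rw [insertPerm_coe, insertFun_castSucc_val]
        revert h3; split_ifs <;> intro h3 <;> omega
    · have hp1 : (π (Fin.last n) : ℕ) + 1 < n + 1 := by
        have := Nat.lt_succ_iff.mp a.isLt; omega
      have hqval : (π (π.symm ⟨(π (Fin.last n) : ℕ) + 1, hp1⟩) : ℕ) =
          (π (Fin.last n) : ℕ) + 1 := by
        rw [Equiv.apply_symm_apply]
      have hqne : π.symm ⟨(π (Fin.last n) : ℕ) + 1, hp1⟩ ≠ Fin.last n := by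
        intro he; rw [he] at hqval; omega
      have hqlt : ((π.symm ⟨(π (Fin.last n) : ℕ) + 1, hp1⟩ : Fin (n+1)) : ℕ) < n := by
        have h4 := Nat.lt_succ_iff.mp (π.symm ⟨(π (Fin.last n) : ℕ) + 1, hp1⟩).isLt
        rcases Nat.lt_or_ge ((π.symm ⟨(π (Fin.last n) : ℕ) + 1, hp1⟩ : Fin (n+1)) : ℕ) n with h | h
        · exact h
        · exact absurd (Fin.ext (by simp only [Fin.val_last]; omega)) hqne
      refine ⟨(π.symm ⟨(π (Fin.last n) : ℕ) + 1, hp1⟩).castSucc, (Fin.last n).castSucc,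
        Fin.last (n+1), by simpa using hqlt, by simp, ?_, ?_, ?_⟩
      · rw [insertPerm_coe, insertFun_castSucc_val, insertFun_castSucc_val, hqval]
        split_ifs <;> omega
      · rw [insertPerm_coe, insertFun_castSucc_val, hqval]
        split_ifs <;> omega
      · rw [insertPerm_coe, insertFun_last]
        omega

/-! ### Rank machinery on finsets of `Fin M` -/

section Rank
variable {M : ℕ}

/-- rank from below -/
def rnk (A : Finset (Fin M)) (a : Fin M) : ℕ :=
  (A.filter (fun (c : Fin M) => (c : ℕ) ≤ (a : ℕ))).card

/-- rank from above -/
def crnk (A : Finset (Fin M)) (a : Fin M) : ℕ :=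
  (A.filter (fun (c : Fin M) => (a : ℕ) ≤ (c : ℕ))).card

lemma rnk_pos {A : Finset (Fin M)} {a : Fin M} (ha : a ∈ A) : 1 ≤ rnk A a :=
  Finset.card_pos.mpr ⟨a, Finset.mem_filter.mpr ⟨ha, le_refl _⟩⟩

lemma crnk_pos {A : Finset (Fin M)} {a : Fin M} (ha : a ∈ A) : 1 ≤ crnk A a :=
  Finset.card_pos.mpr ⟨a, Finset.mem_filter.mpr ⟨ha, le_refl _⟩⟩

lemma rnk_le_card (A : Finset (Fin M)) (a : Fin M) : rnk A a ≤ A.card :=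
  Finset.card_le_card (Finset.filter_subset _ _)

lemma crnk_le_card (A : Finset (Fin M)) (a : Fin M) : crnk A a ≤ A.card :=
  Finset.card_le_card (Finset.filter_subset _ _)

lemma rnk_injOn {A : Finset (Fin M)} {a b : Fin M} (ha : a ∈ A) (hb : b ∈ A)
    (hab : rnk A a = rnk A b) : a = b := by
  by_contra hne
  wlog hlt : (a : ℕ) < (b : ℕ) generalizing a b
  · exact this hb ha hab.symm (Ne.symm hne) (by
      rcases Nat.lt_or_ge (b : ℕ) (a : ℕ) with h | h
      · exact h
      · exact absurd (Fin.ext (by omega : (a : ℕ) = (b : ℕ))) hne)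
  have hsub : A.filter (fun (c : Fin M) => (c : ℕ) ≤ (a : ℕ)) ⊆
      A.filter (fun (c : Fin M) => (c : ℕ) ≤ (b : ℕ)) := by
    intro c hc
    simp only [Finset.mem_filter] at hc ⊢
    exact ⟨hc.1, by omega⟩
  have hss : A.filter (fun (c : Fin M) => (c : ℕ) ≤ (a : ℕ)) ⊂
      A.filter (fun (c : Fin M) => (c : ℕ) ≤ (b : ℕ)) := by
    refine (Finset.ssubset_iff_of_subset hsub).mpr ?_
    exact ⟨b, Finset.mem_filter.mpr ⟨hb, le_refl _⟩, by
      simp only [Finset.mem_filter]; push_neg; intro _; omega⟩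
  exact absurd hab (Nat.ne_of_lt (Finset.card_lt_card hss))

lemma crnk_injOn {A : Finset (Fin M)} {a b : Fin M} (ha : a ∈ A) (hb : b ∈ A)
    (hab : crnk A a = crnk A b) : a = b := by
  by_contra hne
  wlog hlt : (b : ℕ) < (a : ℕ) generalizing a b
  · exact this hb ha hab.symm (Ne.symm hne) (by
      rcases Nat.lt_or_ge (a : ℕ) (b : ℕ) with h | h
      · exact h
      · exact absurd (Fin.ext (by omega : (a : ℕ) = (b : ℕ))) hne)
  have hsub : A.filter (fun (c : Fin M) => (a : ℕ) ≤ (c : ℕ)) ⊆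
      A.filter (fun (c : Fin M) => (b : ℕ) ≤ (c : ℕ)) := by
    intro c hc
    simp only [Finset.mem_filter] at hc ⊢
    exact ⟨hc.1, by omega⟩
  have hss : A.filter (fun (c : Fin M) => (a : ℕ) ≤ (c : ℕ)) ⊂
      A.filter (fun (c : Fin M) => (b : ℕ) ≤ (c : ℕ)) := by
    refine (Finset.ssubset_iff_of_subset hsub).mpr ?_
    exact ⟨b, Finset.mem_filter.mpr ⟨hb, le_refl _⟩, by
      simp only [Finset.mem_filter]; push_neg; intro _; omega⟩
  exact absurd hab (Nat.ne_of_lt (Finset.card_lt_card hss))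

/-- number of elements of `A` of given rank -/
lemma card_rank_eq (A : Finset (Fin M)) (r : Fin M → ℕ)
    (hinj : ∀ a ∈ A, ∀ b ∈ A, r a = r b → a = b)
    (hlo : ∀ a ∈ A, 1 ≤ r a) (hhi : ∀ a ∈ A, r a ≤ A.card) (m : ℕ) :
    (A.filter (fun a => r a = m)).card = if 1 ≤ m ∧ m ≤ A.card then 1 else 0 := by
  have himg : A.image r = Finset.Icc 1 A.card := by
    apply Finset.eq_of_subset_of_card_le
    · intro x hx
      obtain ⟨a, ha, rfl⟩ := Finset.mem_image.mp hx
      exact Finset.mem_Icc.mpr ⟨hlo a ha, hhi a ha⟩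
    · rw [Nat.card_Icc]
      rw [Finset.card_image_of_injOn (fun a ha b hb => hinj a ha b hb)]
      omega
  split
  · next hm =>
    have : m ∈ A.image r := by rw [himg]; exact Finset.mem_Icc.mpr ⟨hm.1, hm.2⟩
    obtain ⟨a, ha, hra⟩ := Finset.mem_image.mp this
    rw [Finset.card_eq_one]
    refine ⟨a, ?_⟩
    ext b
    simp only [Finset.mem_filter, Finset.mem_singleton]
    constructor
    · rintro ⟨hb, hrb⟩; exact hinj b hb a ha (by omega)
    · rintro rfl; exact ⟨ha, hra⟩
  · next hm =>
    rw [Finset.card_eq_zero]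
    rw [Finset.filter_eq_empty_iff]
    intro a ha hra
    exact hm ⟨hra ▸ hlo a ha, hra ▸ hhi a ha⟩

lemma rnk_add_crnk {A : Finset (Fin M)} {a : Fin M} (ha : a ∈ A) :
    rnk A a + crnk A a = A.card + 1 := by
  have hu : A.filter (fun (c : Fin M) => (c : ℕ) ≤ (a : ℕ)) ∪ A.filter (fun (c : Fin M) => (a : ℕ) ≤ (c : ℕ)) = A := by
    ext c
    simp only [Finset.mem_union, Finset.mem_filter]
    constructor
    · rintro (h | h) <;> exact h.1
    · intro h
      rcases Nat.le_or_le (c : ℕ) (a : ℕ) with hc | hc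
      · exact Or.inl ⟨h, hc⟩
      · exact Or.inr ⟨h, hc⟩
  have hi : A.filter (fun (c : Fin M) => (c : ℕ) ≤ (a : ℕ)) ∩ A.filter (fun (c : Fin M) => (a : ℕ) ≤ (c : ℕ)) = {a} := by
    ext c
    simp only [Finset.mem_inter, Finset.mem_filter, Finset.mem_singleton]
    constructor
    · rintro ⟨⟨_, h1⟩, ⟨_, h2⟩⟩; exact Fin.ext (by omega)
    · rintro rfl; exact ⟨⟨ha, le_refl _⟩, ⟨ha, le_refl _⟩⟩
  have := Finset.card_union_add_card_inter
    (A.filter (fun (c : Fin M) => (c : ℕ) ≤ (a : ℕ))) (A.filter (fun (c : Fin M) => (a : ℕ) ≤ (c : ℕ)))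
  rw [hu, hi] at this
  simp only [Finset.card_singleton] at this
  rw [rnk, crnk]
  omega

end Rank

/-! ### Labels -/

def actSB (π : Equiv.Perm (Fin n)) : Finset (Fin (n+1)) :=
  Finset.univ.filter (fun (a : Fin (n+1)) => ¬ BadSB π a)

def actPL (π : Equiv.Perm (Fin n)) : Finset (Fin (n+1)) :=
  Finset.univ.filter (fun (a : Fin (n+1)) => ¬ BadPL π a)

def lastVal (π : Equiv.Perm (Fin (n+1))) : ℕ := (π (Fin.last n) : ℕ)

def hSB (π : Equiv.Perm (Fin (n+1))) : ℕ :=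
  ((actSB π).filter (fun (a : Fin (n+2)) => (a : ℕ) ≤ lastVal π)).card

def kSB (π : Equiv.Perm (Fin (n+1))) : ℕ :=
  ((actSB π).filter (fun (a : Fin (n+2)) => lastVal π < (a : ℕ))).card

def hPL (π : Equiv.Perm (Fin (n+1))) : ℕ :=
  ((actPL π).filter (fun (a : Fin (n+2)) => lastVal π < (a : ℕ))).card

def kPL (π : Equiv.Perm (Fin (n+1))) : ℕ :=
  ((actPL π).filter (fun (a : Fin (n+2)) => (a : ℕ) ≤ lastVal π)).card

lemma hSB_add_kSB (π : Equiv.Perm (Fin (n+1))) : hSB π + kSB π = (actSB π).card := by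
  rw [hSB, kSB, show (actSB π).filter (fun (a : Fin (n+2)) => lastVal π < (a : ℕ)) =
    (actSB π).filter (fun (a : Fin (n+2)) => ¬ ((a : ℕ) ≤ lastVal π)) from by
      ext c; simp [not_le]]
  exact Finset.card_filter_add_card_filter_not _

lemma hPL_add_kPL (π : Equiv.Perm (Fin (n+1))) : hPL π + kPL π = (actPL π).card := by
  rw [hPL, kPL, Nat.add_comm, show (actPL π).filter (fun (a : Fin (n+2)) => lastVal π < (a : ℕ)) =
    (actPL π).filter (fun (a : Fin (n+2)) => ¬ ((a : ℕ) ≤ lastVal π)) from by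
      ext c; simp [not_le]]
  exact Finset.card_filter_add_card_filter_not _

lemma lastVal_insert (π : Equiv.Perm (Fin (n+1))) (a : Fin (n+2)) :
    lastVal (insertPerm π a) = (a : ℕ) := by
  rw [lastVal, insertPerm_last]

lemma mem_actSB {π : Equiv.Perm (Fin n)} {a : Fin (n+1)} : a ∈ actSB π ↔ ¬ BadSB π a := by
  simp [actSB]

lemma mem_actPL {π : Equiv.Perm (Fin n)} {a : Fin (n+1)} : a ∈ actPL π ↔ ¬ BadPL π a := by
  simp [actPL]

lemma mem_actSB_insert {π : Equiv.Perm (Fin (n+1))} {a : Fin (n+2)} {b : Fin (n+3)} :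
    b ∈ actSB (insertPerm π a) ↔
      (unshift a b ∈ actSB π ∧ ¬((a : ℕ) + 1 < (b : ℕ) ∧ (b : ℕ) ≤ lastVal π + 1)) := by
  rw [mem_actSB, mem_actSB, lastVal, badSB_insert_iff, not_or]

lemma mem_actPL_insert {π : Equiv.Perm (Fin (n+1))} {a : Fin (n+2)} {b : Fin (n+3)} :
    b ∈ actPL (insertPerm π a) ↔
      (unshift a b ∈ actPL π ∧ ¬(lastVal π + 1 < (b : ℕ) ∧ (b : ℕ) ≤ (a : ℕ))) := by
  rw [mem_actPL, mem_actPL, lastVal, badPL_insert_iff, not_or]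

lemma unshift_le {a : Fin (n+2)} {b : Fin (n+3)} (h : (b : ℕ) ≤ (a : ℕ)) :
    unshift a b = ⟨(b : ℕ), by have := a.isLt; omega⟩ := by
  apply Fin.ext; rw [unshift_val]; simp [h]

lemma unshift_gt {a : Fin (n+2)} {b : Fin (n+3)} (h : (a : ℕ) < (b : ℕ)) :
    unshift a b = ⟨(b : ℕ) - 1, by have := b.isLt; omega⟩ := by
  apply Fin.ext; rw [unshift_val]; simp [Nat.not_le.mpr h]

/-- the new low label for semi-Baxter is the rank of the inserted site -/
lemma hSB_insert (π : Equiv.Perm (Fin (n+1))) (a : Fin (n+2)) :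
    hSB (insertPerm π a) = rnk (actSB π) a := by
  rw [hSB, lastVal_insert, rnk]
  refine Finset.card_bij'
    (fun b hb => (⟨(b : ℕ), by
      have h2 := (Finset.mem_filter.mp hb).2; have := a.isLt; omega⟩ : Fin (n+2)))
    (fun c _ => c.castSucc) ?_ ?_ ?_ ?_
  · intro b hb
    obtain ⟨hb1, hb2⟩ := Finset.mem_filter.mp hb
    rw [mem_actSB_insert] at hb1
    rw [Finset.mem_filter]
    refine ⟨?_, by simpa using hb2⟩
    have := hb1.1
    rwa [unshift_le hb2] at this
  · intro c hc
    obtain ⟨hc1, hc2⟩ := Finset.mem_filter.mp hc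
    rw [Finset.mem_filter]
    constructor
    · rw [mem_actSB_insert]
      constructor
      · rw [unshift_le (by simpa using hc2)]
        simpa using hc1
      · simp only [Fin.coe_castSucc]
        omega
    · simpa using hc2
  · intro b _; apply Fin.ext; simp
  · intro c _; apply Fin.ext; simp

/-- the new high label for semi-Baxter, case `a ≤ p` -/
lemma kSB_insert_le (π : Equiv.Perm (Fin (n+1))) (a : Fin (n+2))
    (ha : ¬ BadSB π a) (hap : (a : ℕ) ≤ lastVal π) :
    kSB (insertPerm π a) = kSB π + 1 := by
  have hstep : kSB (insertPerm π a) =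
      ((actSB π).filter (fun (c : Fin (n+2)) => (c : ℕ) = (a : ℕ) ∨ lastVal π < (c : ℕ))).card := by
    rw [kSB, lastVal_insert]
    refine Finset.card_bij'
      (fun b _ => (⟨(b : ℕ) - 1, by have := b.isLt; omega⟩ : Fin (n+2)))
      (fun c _ => (⟨(c : ℕ) + 1, by have := c.isLt; omega⟩ : Fin (n+3))) ?_ ?_ ?_ ?_
    · intro b hb
      obtain ⟨hb1, hb2⟩ := Finset.mem_filter.mp hb
      rw [mem_actSB_insert] at hb1
      rw [Finset.mem_filter]
      constructor
      · have := hb1.1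
        rwa [unshift_gt hb2] at this
      · have := hb1.2
        simp only [mkval]
        omega
    · intro c hc
      obtain ⟨hc1, hc2⟩ := Finset.mem_filter.mp hc
      have hca : (a : ℕ) ≤ (c : ℕ) := by omega
      rw [Finset.mem_filter]
      constructor
      · rw [mem_actSB_insert]
        constructor
        · rw [unshift_gt (by simp only [mkval]; omega)]
          simpa using hc1
        · simp only [mkval]
          omega
      · simp only [mkval]
        omega
    · intro b hb
      have hb2 := (Finset.mem_filter.mp hb).2
      apply Fin.ext; simp only [mkval]; omega
    · intro c hc
      apply Fin.ext; simp only [mkval]; omega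
  rw [hstep, kSB]
  have hT : (actSB π).filter (fun (c : Fin (n+2)) => (c : ℕ) = (a : ℕ) ∨ lastVal π < (c : ℕ)) =
      insert a ((actSB π).filter (fun (c : Fin (n+2)) => lastVal π < (c : ℕ))) := by
    ext c
    simp only [Finset.mem_filter, Finset.mem_insert]
    constructor
    · rintro ⟨hc, (h | h)⟩
      · exact Or.inl (Fin.ext h)
      · exact Or.inr ⟨hc, h⟩
    · rintro (rfl | ⟨hc, h⟩)
      · exact ⟨mem_actSB.mpr ha, Or.inl rfl⟩
      · exact ⟨hc, Or.inr h⟩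
  rw [hT, Finset.card_insert_of_notMem (by
    rw [Finset.mem_filter]; push_neg; intro _; omega)]

/-- the new high label for semi-Baxter, case `a > p` -/
lemma kSB_insert_gt (π : Equiv.Perm (Fin (n+1))) (a : Fin (n+2))
    (hap : lastVal π < (a : ℕ)) :
    kSB (insertPerm π a) = crnk (actSB π) a := by
  rw [kSB, lastVal_insert, crnk]
  refine Finset.card_bij'
    (fun b _ => (⟨(b : ℕ) - 1, by have := b.isLt; omega⟩ : Fin (n+2)))
    (fun c _ => (⟨(c : ℕ) + 1, by have := c.isLt; omega⟩ : Fin (n+3))) ?_ ?_ ?_ ?_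
  · intro b hb
    obtain ⟨hb1, hb2⟩ := Finset.mem_filter.mp hb
    rw [mem_actSB_insert] at hb1
    rw [Finset.mem_filter]
    constructor
    · have := hb1.1
      rwa [unshift_gt hb2] at this
    · simp only [mkval]
      omega
  · intro c hc
    obtain ⟨hc1, hc2⟩ := Finset.mem_filter.mp hc
    rw [Finset.mem_filter]
    constructor
    · rw [mem_actSB_insert]
      constructor
      · rw [unshift_gt (by simp only [mkval]; omega)]
        simpa using hc1
      · simp only [mkval]
        omega
    · simp only [mkval]
      omega
  · intro b hb
    have hb2 := (Finset.mem_filter.mp hb).2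
    apply Fin.ext; simp only [mkval]; omega
  · intro c hc
    apply Fin.ext; simp only [mkval]; omega

/-- the new low label for plane is the corank of the inserted site -/
lemma hPL_insert (π : Equiv.Perm (Fin (n+1))) (a : Fin (n+2)) :
    hPL (insertPerm π a) = crnk (actPL π) a := by
  rw [hPL, lastVal_insert, crnk]
  refine Finset.card_bij'
    (fun b _ => (⟨(b : ℕ) - 1, by have := b.isLt; omega⟩ : Fin (n+2)))
    (fun c _ => (⟨(c : ℕ) + 1, by have := c.isLt; omega⟩ : Fin (n+3))) ?_ ?_ ?_ ?_
  · intro b hb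
    obtain ⟨hb1, hb2⟩ := Finset.mem_filter.mp hb
    rw [mem_actPL_insert] at hb1
    rw [Finset.mem_filter]
    constructor
    · have := hb1.1
      rwa [unshift_gt hb2] at this
    · simp only [mkval]
      omega
  · intro c hc
    obtain ⟨hc1, hc2⟩ := Finset.mem_filter.mp hc
    rw [Finset.mem_filter]
    constructor
    · rw [mem_actPL_insert]
      constructor
      · rw [unshift_gt (by simp only [mkval]; omega)]
        simpa using hc1
      · simp only [mkval]
        omega
    · simp only [mkval]
      omega
  · intro b hb
    have hb2 := (Finset.mem_filter.mp hb).2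
    apply Fin.ext; simp only [mkval]; omega
  · intro c hc
    apply Fin.ext; simp only [mkval]; omega

/-- the new high label for plane, case `a ≤ p` -/
lemma kPL_insert_le (π : Equiv.Perm (Fin (n+1))) (a : Fin (n+2))
    (hap : (a : ℕ) ≤ lastVal π) :
    kPL (insertPerm π a) = rnk (actPL π) a := by
  rw [kPL, lastVal_insert, rnk]
  refine Finset.card_bij'
    (fun b hb => (⟨(b : ℕ), by
      have h2 := (Finset.mem_filter.mp hb).2; have := a.isLt; omega⟩ : Fin (n+2)))
    (fun c _ => c.castSucc) ?_ ?_ ?_ ?_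
  · intro b hb
    obtain ⟨hb1, hb2⟩ := Finset.mem_filter.mp hb
    rw [mem_actPL_insert] at hb1
    rw [Finset.mem_filter]
    refine ⟨?_, by simpa using hb2⟩
    have := hb1.1
    rwa [unshift_le hb2] at this
  · intro c hc
    obtain ⟨hc1, hc2⟩ := Finset.mem_filter.mp hc
    rw [Finset.mem_filter]
    constructor
    · rw [mem_actPL_insert]
      constructor
      · rw [unshift_le (by simpa using hc2)]
        simpa using hc1
      · simp only [Fin.coe_castSucc]
        omega
    · simpa using hc2
  · intro b _; apply Fin.ext; simp
  · intro c _; apply Fin.ext; simp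

/-- the site just above the last value is always active for plane permutations -/
lemma p1_mem_actPL (π : Equiv.Perm (Fin (n+1))) (hπ : ¬ Contains2143 ⇑π)
    (b : Fin (n+2)) (hb : (b : ℕ) = lastVal π + 1) : b ∈ actPL π := by
  rw [mem_actPL]
  rintro ⟨i, j, j', hij, hj', h1, h2, h3⟩
  rw [hb, lastVal] at h2 h3
  have hjn' : (j' : ℕ) ≤ n := Nat.lt_succ_iff.mp j'.isLt
  have hine : i ≠ Fin.last n := by
    intro he
    have := congrArg (fun z : Fin (n+1) => (z : ℕ)) he
    simp only [Fin.val_last] at this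
    omega
  have hj'ne : j' ≠ Fin.last n := by
    intro he
    rw [he] at h3
    omega
  have hj'lt : (j' : ℕ) < n := by
    rcases Nat.lt_or_ge (j' : ℕ) n with h | h
    · exact h
    · exact absurd (Fin.ext (by simp only [Fin.val_last]; omega)) hj'ne
  have hi1 : (π i : ℕ) ≠ (π (Fin.last n) : ℕ) := perm_val_ne π hine
  exact hπ ⟨i, j, j', Fin.last n, hij, hj', by simp only [Fin.val_last]; omega,
    Fin.lt_def.mpr h1, Fin.lt_def.mpr (by omega), Fin.lt_def.mpr (by omega)⟩

/-- the new high label for plane, case `a > p` -/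
lemma kPL_insert_gt (π : Equiv.Perm (Fin (n+1))) (a : Fin (n+2))
    (hπ : ¬ Contains2143 ⇑π) (hap : lastVal π < (a : ℕ)) :
    kPL (insertPerm π a) = kPL π + 1 := by
  have hpn : lastVal π + 1 < n + 2 := by
    rw [lastVal]; have := (π (Fin.last n)).isLt; omega
  have hstep : kPL (insertPerm π a) =
      ((actPL π).filter (fun (c : Fin (n+2)) => (c : ℕ) ≤ lastVal π + 1)).card := by
    rw [kPL, lastVal_insert]
    refine Finset.card_bij'
      (fun b hb => (⟨(b : ℕ), by
        have h2 := (Finset.mem_filter.mp hb).2; have := a.isLt; omega⟩ : Fin (n+2)))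
      (fun c _ => c.castSucc) ?_ ?_ ?_ ?_
    · intro b hb
      obtain ⟨hb1, hb2⟩ := Finset.mem_filter.mp hb
      rw [mem_actPL_insert] at hb1
      rw [Finset.mem_filter]
      constructor
      · have := hb1.1
        rwa [unshift_le hb2] at this
      · have := hb1.2
        simp only [mkval]
        omega
    · intro c hc
      obtain ⟨hc1, hc2⟩ := Finset.mem_filter.mp hc
      have hca : (c : ℕ) ≤ (a : ℕ) := by omega
      rw [Finset.mem_filter]
      constructor
      · rw [mem_actPL_insert]
        constructor
        · rw [unshift_le (by simpa using hca)]
          simpa using hc1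
        · simp only [Fin.coe_castSucc]
          omega
      · simpa using hca
    · intro b _; apply Fin.ext; simp
    · intro c _; apply Fin.ext; simp
  rw [hstep, kPL]
  have hT : (actPL π).filter (fun (c : Fin (n+2)) => (c : ℕ) ≤ lastVal π + 1) =
      insert (⟨lastVal π + 1, hpn⟩ : Fin (n+2))
        ((actPL π).filter (fun (c : Fin (n+2)) => (c : ℕ) ≤ lastVal π)) := by
    ext c
    simp only [Finset.mem_filter, Finset.mem_insert]
    constructor
    · rintro ⟨hc, h⟩
      rcases Nat.lt_or_ge (c : ℕ) (lastVal π + 1) with h2 | h2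
      · exact Or.inr ⟨hc, by omega⟩
      · exact Or.inl (Fin.ext (by simp only [mkval]; omega))
    · rintro (rfl | ⟨hc, h⟩)
      · exact ⟨p1_mem_actPL π hπ _ rfl, by simp⟩
      · exact ⟨hc, by omega⟩
  rw [hT, Finset.card_insert_of_notMem (by
    rw [Finset.mem_filter]; push_neg; intro _; simp only [mkval]; omega)]

/-! ### Abstract counting of children with a given label -/

/-- weight of the succession rule `Ω_semi` -/
def w (h k h' k' : ℕ) : ℕ :=
  (if 1 ≤ h' ∧ h' ≤ h ∧ k' = k + 1 then 1 else 0) +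
  (if h < h' ∧ h' ≤ h + k ∧ h' + k' = h + k + 1 then 1 else 0)

section Abstract
variable {M : ℕ}

lemma rnk_side {A : Finset (Fin M)} {a : Fin M} (ha : a ∈ A) (P : ℕ) :
    (a : ℕ) ≤ P ↔ rnk A a ≤ (A.filter (fun (c : Fin M) => (c : ℕ) ≤ P)).card := by
  constructor
  · intro h
    apply Finset.card_le_card
    intro c hc
    simp only [Finset.mem_filter] at hc ⊢
    exact ⟨hc.1, by omega⟩
  · intro h
    by_contra hPa
    push_neg at hPa
    have hsub : insert a (A.filter (fun (c : Fin M) => (c : ℕ) ≤ P)) ⊆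
        A.filter (fun (c : Fin M) => (c : ℕ) ≤ (a : ℕ)) := by
      intro c hc
      rcases Finset.mem_insert.mp hc with rfl | hc
      · exact Finset.mem_filter.mpr ⟨ha, le_refl _⟩
      · simp only [Finset.mem_filter] at hc ⊢
        exact ⟨hc.1, by omega⟩
    have hcard := Finset.card_le_card hsub
    rw [Finset.card_insert_of_notMem (by
      rw [Finset.mem_filter]; push_neg; intro _; omega)] at hcard
    rw [rnk] at h
    omega

lemma crnk_side {A : Finset (Fin M)} {a : Fin M} (ha : a ∈ A) (P : ℕ) :
    P < (a : ℕ) ↔ crnk A a ≤ (A.filter (fun (c : Fin M) => P < (c : ℕ))).card := by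
  constructor
  · intro h
    apply Finset.card_le_card
    intro c hc
    simp only [Finset.mem_filter] at hc ⊢
    exact ⟨hc.1, by omega⟩
  · intro h
    by_contra hPa
    push_neg at hPa
    have hsub : insert a (A.filter (fun (c : Fin M) => P < (c : ℕ))) ⊆
        A.filter (fun (c : Fin M) => (a : ℕ) ≤ (c : ℕ)) := by
      intro c hc
      rcases Finset.mem_insert.mp hc with rfl | hc
      · exact Finset.mem_filter.mpr ⟨ha, le_refl _⟩
      · simp only [Finset.mem_filter] at hc ⊢
        exact ⟨hc.1, by omega⟩
    have hcard := Finset.card_le_card hsub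
    rw [Finset.card_insert_of_notMem (by
      rw [Finset.mem_filter]; push_neg; intro _; omega)] at hcard
    rw [crnk] at h
    omega

lemma count_label_abstract (A : Finset (Fin M)) (r : Fin M → ℕ) (s : Fin M → Prop)
    [DecidablePred s]
    (hinj : ∀ a ∈ A, ∀ b ∈ A, r a = r b → a = b)
    (hlo : ∀ a ∈ A, 1 ≤ r a) (hhi : ∀ a ∈ A, r a ≤ A.card)
    (hside : ∀ a ∈ A, (s a ↔ r a ≤ (A.filter s).card))
    (f g : Fin M → ℕ)
    (hf : ∀ a ∈ A, f a = r a)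
    (hgs : ∀ a ∈ A, s a → g a = (A.filter (fun c => ¬ s c)).card + 1)
    (hgn : ∀ a ∈ A, ¬ s a → r a + g a = A.card + 1)
    (h' k' : ℕ) :
    (A.filter (fun a => f a = h' ∧ g a = k')).card =
      w (A.filter s).card (A.filter (fun c => ¬ s c)).card h' k' := by
  set H := (A.filter s).card with hH
  set K := (A.filter (fun c => ¬ s c)).card with hK
  have hHK : H + K = A.card := Finset.card_filter_add_card_filter_not s
  have hsplit : (A.filter (fun a => f a = h' ∧ g a = k')).card =
      (A.filter (fun a => (f a = h' ∧ g a = k') ∧ s a)).card +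
      (A.filter (fun a => (f a = h' ∧ g a = k') ∧ ¬ s a)).card := by
    have hfc := Finset.card_filter_add_card_filter_not
      (s := A.filter (fun a => f a = h' ∧ g a = k')) (p := s)
    rw [Finset.filter_filter, Finset.filter_filter] at hfc
    exact hfc.symm
  have hT1 : (A.filter (fun a => (f a = h' ∧ g a = k') ∧ s a)).card =
      if 1 ≤ h' ∧ h' ≤ H ∧ k' = K + 1 then 1 else 0 := by
    have e1 : A.filter (fun a => (f a = h' ∧ g a = k') ∧ s a) =
        A.filter (fun a => (r a = h' ∧ k' = K + 1) ∧ r a ≤ H) := by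
      apply Finset.filter_congr
      intro a ha
      rw [hf a ha]
      constructor
      · rintro ⟨⟨h1, h2⟩, h3⟩
        exact ⟨⟨h1, by rw [← hgs a ha h3, h2]⟩, (hside a ha).mp h3⟩
      · rintro ⟨⟨h1, h2⟩, h3⟩
        have hs := (hside a ha).mpr h3
        exact ⟨⟨h1, by rw [hgs a ha hs, h2]⟩, hs⟩
    rw [e1]
    by_cases hc : k' = K + 1 ∧ h' ≤ H
    · have e2 : A.filter (fun a => (r a = h' ∧ k' = K + 1) ∧ r a ≤ H) =
          A.filter (fun a => r a = h') := by
        apply Finset.filter_congr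
        intro a ha
        constructor
        · rintro ⟨⟨h1, _⟩, _⟩; exact h1
        · intro h1; exact ⟨⟨h1, hc.1⟩, by omega⟩
      rw [e2, card_rank_eq A r hinj hlo hhi h']
      have hHA : H ≤ A.card := by omega
      split_ifs <;> omega
    · rw [Finset.card_eq_zero.mpr, if_neg]
      · exact fun hcon => hc ⟨hcon.2.2, hcon.2.1⟩
      · rw [Finset.filter_eq_empty_iff]
        rintro a _ ⟨⟨h1, h2⟩, h3⟩
        exact hc ⟨h2, by omega⟩
  have hT2 : (A.filter (fun a => (f a = h' ∧ g a = k') ∧ ¬ s a)).card =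
      if H < h' ∧ h' ≤ H + K ∧ h' + k' = H + K + 1 then 1 else 0 := by
    have e1 : A.filter (fun a => (f a = h' ∧ g a = k') ∧ ¬ s a) =
        A.filter (fun a => (r a = h' ∧ h' + k' = H + K + 1) ∧ H < r a) := by
      apply Finset.filter_congr
      intro a ha
      rw [hf a ha]
      constructor
      · rintro ⟨⟨h1, h2⟩, h3⟩
        have := hgn a ha h3
        have hHr : ¬ (r a ≤ H) := fun hle => h3 ((hside a ha).mpr hle)
        exact ⟨⟨h1, by omega⟩, by omega⟩
      · rintro ⟨⟨h1, h2⟩, h3⟩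
        have hns : ¬ s a := fun hs => by
          have := (hside a ha).mp hs; omega
        have := hgn a ha hns
        exact ⟨⟨h1, by omega⟩, hns⟩
    rw [e1]
    by_cases hc : h' + k' = H + K + 1 ∧ H < h'
    · have e2 : A.filter (fun a => (r a = h' ∧ h' + k' = H + K + 1) ∧ H < r a) =
          A.filter (fun a => r a = h') := by
        apply Finset.filter_congr
        intro a ha
        constructor
        · rintro ⟨⟨h1, _⟩, _⟩; exact h1
        · intro h1; exact ⟨⟨h1, hc.1⟩, by omega⟩
      rw [e2, card_rank_eq A r hinj hlo hhi h']
      split_ifs <;> omega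
    · rw [Finset.card_eq_zero.mpr, if_neg]
      · exact fun hcon => hc ⟨hcon.2.2, hcon.1⟩
      · rw [Finset.filter_eq_empty_iff]
        rintro a _ ⟨⟨h1, h2⟩, h3⟩
        exact hc ⟨h2, by omega⟩
  rw [hsplit, hT1, hT2, w]

end Abstract

/-! ### Children counts for the two classes -/

lemma child_count_SB (π : Equiv.Perm (Fin (n+1))) (h' k' : ℕ) :
    (Finset.univ.filter (fun (a : Fin (n+2)) => ¬ BadSB π a ∧
      hSB (insertPerm π a) = h' ∧ kSB (insertPerm π a) = k')).card =
    w (hSB π) (kSB π) h' k' := by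
  have e0 : Finset.univ.filter (fun (a : Fin (n+2)) => ¬ BadSB π a ∧
      hSB (insertPerm π a) = h' ∧ kSB (insertPerm π a) = k') =
      (actSB π).filter (fun a => hSB (insertPerm π a) = h' ∧ kSB (insertPerm π a) = k') := by
    rw [actSB, Finset.filter_filter]
  rw [e0, hSB, kSB, show (actSB π).filter (fun (a : Fin (n+2)) => lastVal π < (a : ℕ)) =
    (actSB π).filter (fun (a : Fin (n+2)) => ¬ (a : ℕ) ≤ lastVal π) from by ext c; simp [not_le]]
  exact count_label_abstract (actSB π) (rnk (actSB π))
    (fun a => (a : ℕ) ≤ lastVal π)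
    (fun a ha b hb => rnk_injOn ha hb)
    (fun a ha => rnk_pos ha)
    (fun a _ => rnk_le_card _ a)
    (fun a ha => rnk_side ha (lastVal π))
    (fun a => hSB (insertPerm π a)) (fun a => kSB (insertPerm π a))
    (fun a _ => hSB_insert π a)
    (fun a ha hs => by
      beta_reduce
      rw [kSB_insert_le π a (mem_actSB.mp ha) hs, kSB]
      congr 2
      ext c
      simp [not_le])
    (fun a ha hs => by
      beta_reduce
      rw [kSB_insert_gt π a (by omega)]
      exact rnk_add_crnk ha)
    h' k'

lemma child_count_PL (π : Equiv.Perm (Fin (n+1))) (hπ : ¬ Contains2143 ⇑π) (h' k' : ℕ) :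
    (Finset.univ.filter (fun (a : Fin (n+2)) => ¬ BadPL π a ∧
      hPL (insertPerm π a) = h' ∧ kPL (insertPerm π a) = k')).card =
    w (hPL π) (kPL π) h' k' := by
  have e0 : Finset.univ.filter (fun (a : Fin (n+2)) => ¬ BadPL π a ∧
      hPL (insertPerm π a) = h' ∧ kPL (insertPerm π a) = k') =
      (actPL π).filter (fun a => hPL (insertPerm π a) = h' ∧ kPL (insertPerm π a) = k') := by
    rw [actPL, Finset.filter_filter]
  rw [e0, hPL, kPL, show (actPL π).filter (fun (a : Fin (n+2)) => (a : ℕ) ≤ lastVal π) =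
    (actPL π).filter (fun (a : Fin (n+2)) => ¬ lastVal π < (a : ℕ)) from by ext c; simp [not_lt]]
  exact count_label_abstract (actPL π) (crnk (actPL π))
    (fun a => lastVal π < (a : ℕ))
    (fun a ha b hb => crnk_injOn ha hb)
    (fun a ha => crnk_pos ha)
    (fun a _ => crnk_le_card _ a)
    (fun a ha => crnk_side ha (lastVal π))
    (fun a => hPL (insertPerm π a)) (fun a => kPL (insertPerm π a))
    (fun a _ => hPL_insert π a)
    (fun a ha hs => by
      beta_reduce
      rw [kPL_insert_gt π a hπ hs, kPL]
      congr 2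
      ext c
      simp [not_lt])
    (fun a ha hs => by
      beta_reduce
      rw [kPL_insert_le π a (by omega)]
      exact (Nat.add_comm _ _).trans (rnk_add_crnk ha))
    h' k'

/-! ### The counting sequences and their recurrence -/

noncomputable def NS (n h k : ℕ) : ℕ :=
  (Finset.univ.filter (fun π : Equiv.Perm (Fin (n+1)) =>
    ¬ Contains2413 ⇑π ∧ hSB π = h ∧ kSB π = k)).card

noncomputable def NP (n h k : ℕ) : ℕ :=
  (Finset.univ.filter (fun π : Equiv.Perm (Fin (n+1)) =>
    ¬ Contains2143 ⇑π ∧ hPL π = h ∧ kPL π = k)).card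

lemma insertPerm_delete (σ : Equiv.Perm (Fin (n+2))) :
    insertPerm (deletePerm σ) (σ (Fin.last (n+1))) = σ :=
  Equiv.coe_fn_injective (show ⇑(insertPerm (deletePerm σ) (σ (Fin.last (n+1)))) = ⇑σ from by
    rw [insertPerm_coe]; exact insert_delete σ)

lemma card_filter_prod {α β : Type*} [Fintype α] [Fintype β] [DecidableEq α]
    (q : α × β → Prop) [DecidablePred q] :
    (Finset.univ.filter q).card = ∑ x : α, (Finset.univ.filter (fun y => q (x, y))).card := by
  rw [Finset.card_eq_sum_card_fiberwise (f := Prod.fst) (t := Finset.univ)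
    (fun x _ => Finset.mem_univ _)]
  refine Finset.sum_congr rfl ?_
  intro x _
  refine Finset.card_bij' (fun p _ => p.2) (fun y _ => (x, y)) ?_ ?_ ?_ ?_
  · intro p hp
    obtain ⟨hp1, hp2⟩ := Finset.mem_filter.mp hp
    have hq := (Finset.mem_filter.mp hp1).2
    rw [Finset.mem_filter]
    refine ⟨Finset.mem_univ _, ?_⟩
    show q (x, p.2)
    rw [← hp2, Prod.mk.eta]
    exact hq
  · intro y hy
    rw [Finset.mem_filter] at hy ⊢
    exact ⟨Finset.mem_filter.mpr ⟨Finset.mem_univ _, hy.2⟩, rfl⟩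
  · intro p hp
    obtain ⟨hp1, hfst⟩ := Finset.mem_filter.mp hp
    show ((x, p.2) : α × β) = p
    rw [← hfst, Prod.mk.eta]
  · intro y _
    rfl

lemma hSB_lt (π : Equiv.Perm (Fin (n+1))) : hSB π < n + 3 := by
  have h1 : hSB π ≤ (actSB π).card := Finset.card_filter_le _ _
  have h2 : (actSB π).card ≤ (Finset.univ : Finset (Fin (n+2))).card := Finset.card_le_univ _
  simp only [Finset.card_univ, Fintype.card_fin] at h2
  omega

lemma kSB_lt (π : Equiv.Perm (Fin (n+1))) : kSB π < n + 3 := by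
  have h1 : kSB π ≤ (actSB π).card := Finset.card_filter_le _ _
  have h2 : (actSB π).card ≤ (Finset.univ : Finset (Fin (n+2))).card := Finset.card_le_univ _
  simp only [Finset.card_univ, Fintype.card_fin] at h2
  omega

lemma hPL_lt (π : Equiv.Perm (Fin (n+1))) : hPL π < n + 3 := by
  have h1 : hPL π ≤ (actPL π).card := Finset.card_filter_le _ _
  have h2 : (actPL π).card ≤ (Finset.univ : Finset (Fin (n+2))).card := Finset.card_le_univ _
  simp only [Finset.card_univ, Fintype.card_fin] at h2
  omega

lemma kPL_lt (π : Equiv.Perm (Fin (n+1))) : kPL π < n + 3 := by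
  have h1 : kPL π ≤ (actPL π).card := Finset.card_filter_le _ _
  have h2 : (actPL π).card ≤ (Finset.univ : Finset (Fin (n+2))).card := Finset.card_le_univ _
  simp only [Finset.card_univ, Fintype.card_fin] at h2
  omega

lemma NS_succ (n h' k' : ℕ) :
    NS (n+1) h' k' = ∑ q ∈ (Finset.range (n+3) ×ˢ Finset.range (n+3)),
      NS n q.1 q.2 * w q.1 q.2 h' k' := by
  have e1 : NS (n+1) h' k' =
      (Finset.univ.filter (fun q : Equiv.Perm (Fin (n+1)) × Fin (n+2) =>
        ¬ Contains2413 ⇑q.1 ∧ ¬ BadSB q.1 q.2 ∧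
        hSB (insertPerm q.1 q.2) = h' ∧ kSB (insertPerm q.1 q.2) = k')).card := by
    rw [NS]
    refine Finset.card_bij'
      (fun σ _ => (deletePerm σ, σ (Fin.last (n+1))))
      (fun q _ => insertPerm q.1 q.2) ?_ ?_ ?_ ?_
    · intro σ hσ
      obtain ⟨hC, hh, hk⟩ := (Finset.mem_filter.mp hσ).2
      have hid := insertPerm_delete σ
      rw [Finset.mem_filter]
      refine ⟨Finset.mem_univ _, ?_, ?_, ?_, ?_⟩
      · intro hC'
        apply hC
        rw [← hid, insertPerm_coe]
        exact (contains2413_insert_iff _ _).mpr (Or.inl hC')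
      · intro hB
        apply hC
        rw [← hid, insertPerm_coe]
        exact (contains2413_insert_iff _ _).mpr (Or.inr hB)
      · rw [hid]; exact hh
      · rw [hid]; exact hk
    · intro q hq
      obtain ⟨hC, hB, hh, hk⟩ := (Finset.mem_filter.mp hq).2
      rw [Finset.mem_filter]
      refine ⟨Finset.mem_univ _, ?_, hh, hk⟩
      intro hcc
      rw [insertPerm_coe] at hcc
      rcases (contains2413_insert_iff _ _).mp hcc with h | h
      · exact hC h
      · exact hB h
    · intro σ _
      exact insertPerm_delete σ
    · intro q _
      exact Prod.ext (delete_insert q.1 q.2) (insertPerm_last q.1 q.2)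
  rw [e1, card_filter_prod]
  have e2 : ∀ π : Equiv.Perm (Fin (n+1)),
      (Finset.univ.filter (fun a : Fin (n+2) => ¬ Contains2413 ⇑π ∧ ¬ BadSB π a ∧
        hSB (insertPerm π a) = h' ∧ kSB (insertPerm π a) = k')).card =
      if ¬ Contains2413 ⇑π then w (hSB π) (kSB π) h' k' else 0 := by
    intro π
    by_cases hC : Contains2413 ⇑π
    · rw [if_neg (by simpa using hC), Finset.card_eq_zero.mpr]
      rw [Finset.filter_eq_empty_iff]
      rintro a _ ⟨hC', _⟩
      exact hC' hC
    · rw [if_pos hC, ← child_count_SB π h' k']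
      congr 1
      apply Finset.filter_congr
      intro a _
      simp [hC]
  simp only [e2]
  rw [← Finset.sum_filter]
  rw [← Finset.sum_fiberwise_of_maps_to (g := fun π => (hSB π, kSB π))
    (t := Finset.range (n+3) ×ˢ Finset.range (n+3))
    (fun π _ => Finset.mem_product.mpr ⟨Finset.mem_range.mpr (hSB_lt π),
      Finset.mem_range.mpr (kSB_lt π)⟩)]
  refine Finset.sum_congr rfl ?_
  intro p _
  have e3 : ∀ π ∈ (Finset.univ.filter (fun π : Equiv.Perm (Fin (n+1)) =>
      ¬ Contains2413 ⇑π)).filter (fun π => (hSB π, kSB π) = p),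
      w (hSB π) (kSB π) h' k' = w p.1 p.2 h' k' := by
    intro π hπ
    have hlab := (Finset.mem_filter.mp hπ).2
    subst hlab
    rfl
  rw [Finset.sum_congr rfl e3, Finset.sum_const, smul_eq_mul]
  congr 1
  rw [NS, Finset.filter_filter]
  congr 1
  apply Finset.filter_congr
  intro π _
  simp [Prod.ext_iff]

lemma NP_succ (n h' k' : ℕ) :
    NP (n+1) h' k' = ∑ q ∈ (Finset.range (n+3) ×ˢ Finset.range (n+3)),
      NP n q.1 q.2 * w q.1 q.2 h' k' := by
  have e1 : NP (n+1) h' k' =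
      (Finset.univ.filter (fun q : Equiv.Perm (Fin (n+1)) × Fin (n+2) =>
        ¬ Contains2143 ⇑q.1 ∧ ¬ BadPL q.1 q.2 ∧
        hPL (insertPerm q.1 q.2) = h' ∧ kPL (insertPerm q.1 q.2) = k')).card := by
    rw [NP]
    refine Finset.card_bij'
      (fun σ _ => (deletePerm σ, σ (Fin.last (n+1))))
      (fun q _ => insertPerm q.1 q.2) ?_ ?_ ?_ ?_
    · intro σ hσ
      obtain ⟨hC, hh, hk⟩ := (Finset.mem_filter.mp hσ).2
      have hid := insertPerm_delete σ
      rw [Finset.mem_filter]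
      refine ⟨Finset.mem_univ _, ?_, ?_, ?_, ?_⟩
      · intro hC'
        apply hC
        rw [← hid, insertPerm_coe]
        exact (contains2143_insert_iff _ _).mpr (Or.inl hC')
      · intro hB
        apply hC
        rw [← hid, insertPerm_coe]
        exact (contains2143_insert_iff _ _).mpr (Or.inr hB)
      · rw [hid]; exact hh
      · rw [hid]; exact hk
    · intro q hq
      obtain ⟨hC, hB, hh, hk⟩ := (Finset.mem_filter.mp hq).2
      rw [Finset.mem_filter]
      refine ⟨Finset.mem_univ _, ?_, hh, hk⟩
      intro hcc
      rw [insertPerm_coe] at hcc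
      rcases (contains2143_insert_iff _ _).mp hcc with h | h
      · exact hC h
      · exact hB h
    · intro σ _
      exact insertPerm_delete σ
    · intro q _
      exact Prod.ext (delete_insert q.1 q.2) (insertPerm_last q.1 q.2)
  rw [e1, card_filter_prod]
  have e2 : ∀ π : Equiv.Perm (Fin (n+1)),
      (Finset.univ.filter (fun a : Fin (n+2) => ¬ Contains2143 ⇑π ∧ ¬ BadPL π a ∧
        hPL (insertPerm π a) = h' ∧ kPL (insertPerm π a) = k')).card =
      if ¬ Contains2143 ⇑π then w (hPL π) (kPL π) h' k' else 0 := by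
    intro π
    by_cases hC : Contains2143 ⇑π
    · rw [if_neg (by simpa using hC), Finset.card_eq_zero.mpr]
      rw [Finset.filter_eq_empty_iff]
      rintro a _ ⟨hC', _⟩
      exact hC' hC
    · rw [if_pos hC, ← child_count_PL π hC h' k']
      congr 1
      apply Finset.filter_congr
      intro a _
      simp [hC]
  simp only [e2]
  rw [← Finset.sum_filter]
  rw [← Finset.sum_fiberwise_of_maps_to (g := fun π => (hPL π, kPL π))
    (t := Finset.range (n+3) ×ˢ Finset.range (n+3))
    (fun π _ => Finset.mem_product.mpr ⟨Finset.mem_range.mpr (hPL_lt π),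
      Finset.mem_range.mpr (kPL_lt π)⟩)]
  refine Finset.sum_congr rfl ?_
  intro p _
  have e3 : ∀ π ∈ (Finset.univ.filter (fun π : Equiv.Perm (Fin (n+1)) =>
      ¬ Contains2143 ⇑π)).filter (fun π => (hPL π, kPL π) = p),
      w (hPL π) (kPL π) h' k' = w p.1 p.2 h' k' := by
    intro π hπ
    have hlab := (Finset.mem_filter.mp hπ).2
    subst hlab
    rfl
  rw [Finset.sum_congr rfl e3, Finset.sum_const, smul_eq_mul]
  congr 1
  rw [NP, Finset.filter_filter]
  congr 1
  apply Finset.filter_congr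
  intro π _
  simp [Prod.ext_iff]

/-! ### Base case -/

lemma actSB_one (π : Equiv.Perm (Fin 1)) : actSB π = Finset.univ := by
  ext a
  simp only [Finset.mem_univ, iff_true]
  rw [mem_actSB]
  rintro ⟨i, j, j', hij, _⟩
  have := i.isLt; have := j.isLt
  omega

lemma actPL_one (π : Equiv.Perm (Fin 1)) : actPL π = Finset.univ := by
  ext a
  simp only [Finset.mem_univ, iff_true]
  rw [mem_actPL]
  rintro ⟨i, j, j', hij, _⟩
  have := i.isLt; have := j.isLt
  omega

lemma lastVal_one (π : Equiv.Perm (Fin 1)) : lastVal π = 0 := by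
  rw [lastVal]
  have := (π (Fin.last 0)).isLt
  omega

lemma not_contains2413_one (π : Equiv.Perm (Fin 1)) : ¬ Contains2413 ⇑π := by
  rintro ⟨i, j, j', k, hij, _⟩
  have := i.isLt; have := j.isLt
  omega

lemma not_contains2143_one (π : Equiv.Perm (Fin 1)) : ¬ Contains2143 ⇑π := by
  rintro ⟨i, j, j', k, hij, _⟩
  have := i.isLt; have := j.isLt
  omega

lemma hSB_one (π : Equiv.Perm (Fin 1)) : hSB π = 1 := by
  rw [hSB, actSB_one, lastVal_one]; decide

lemma kSB_one (π : Equiv.Perm (Fin 1)) : kSB π = 1 := by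
  rw [kSB, actSB_one, lastVal_one]; decide

lemma hPL_one (π : Equiv.Perm (Fin 1)) : hPL π = 1 := by
  rw [hPL, actPL_one, lastVal_one]; decide

lemma kPL_one (π : Equiv.Perm (Fin 1)) : kPL π = 1 := by
  rw [kPL, actPL_one, lastVal_one]; decide

lemma NS_zero (h k : ℕ) : NS 0 h k = if h = 1 ∧ k = 1 then 1 else 0 := by
  rw [NS]
  by_cases hc : h = 1 ∧ k = 1
  · rw [if_pos hc]
    have : Finset.univ.filter (fun π : Equiv.Perm (Fin 1) =>
        ¬ Contains2413 ⇑π ∧ hSB π = h ∧ kSB π = k) = Finset.univ := by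
      ext π
      simp [not_contains2413_one, hSB_one, kSB_one, hc.1, hc.2]
    rw [this, Finset.card_univ, Fintype.card_perm]
    simp
  · rw [if_neg hc, Finset.card_eq_zero.mpr]
    rw [Finset.filter_eq_empty_iff]
    rintro π _ ⟨_, hh, hk⟩
    rw [hSB_one] at hh
    rw [kSB_one] at hk
    exact hc ⟨hh.symm, hk.symm⟩

lemma NP_zero (h k : ℕ) : NP 0 h k = if h = 1 ∧ k = 1 then 1 else 0 := by
  rw [NP]
  by_cases hc : h = 1 ∧ k = 1
  · rw [if_pos hc]
    have : Finset.univ.filter (fun π : Equiv.Perm (Fin 1) =>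
        ¬ Contains2143 ⇑π ∧ hPL π = h ∧ kPL π = k) = Finset.univ := by
      ext π
      simp [not_contains2143_one, hPL_one, kPL_one, hc.1, hc.2]
    rw [this, Finset.card_univ, Fintype.card_perm]
    simp
  · rw [if_neg hc, Finset.card_eq_zero.mpr]
    rw [Finset.filter_eq_empty_iff]
    rintro π _ ⟨_, hh, hk⟩
    rw [hPL_one] at hh
    rw [kPL_one] at hk
    exact hc ⟨hh.symm, hk.symm⟩

lemma NS_eq_NP : ∀ n h k, NS n h k = NP n h k := by
  intro n
  induction n with
  | zero => intro h k; rw [NS_zero, NP_zero]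
  | succ n ih =>
    intro h k
    rw [NS_succ, NP_succ]
    refine Finset.sum_congr rfl ?_
    intro p _
    rw [ih p.1 p.2]

end SBP

/-- Number of plane permutations of size `n` with label `(h, k)`: `h`
(resp. `k`) is the number of active sites strictly above (resp. weakly below)
the last entry. -/
noncomputable def planeLabelCount (n h k : ℕ) : ℕ :=
  Nat.card {π : Equiv.Perm (Fin n) // IsPlane π ∧
    ∃ hn : 0 < n,
      h = Nat.card {a : Fin (n + 1) // ¬ Contains2143 (insertFun π a) ∧
            ((π ⟨n - 1, Nat.sub_lt hn Nat.one_pos⟩ : Fin n) : ℕ) < (a : ℕ)} ∧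
      k = Nat.card {a : Fin (n + 1) // ¬ Contains2143 (insertFun π a) ∧
            (a : ℕ) ≤ ((π ⟨n - 1, Nat.sub_lt hn Nat.one_pos⟩ : Fin n) : ℕ)}}

open SBP in
lemma cardA_SB {m : ℕ} (π : Equiv.Perm (Fin (m+1))) (hπ : ¬ Contains2413 ⇑π)
    (pf : m + 1 - 1 < m + 1) :
    Nat.card {a : Fin (m+2) // ¬ Contains2413 (insertFun π a) ∧
      (a : ℕ) ≤ ((π ⟨m + 1 - 1, pf⟩ : Fin (m+1)) : ℕ)} = SBP.hSB π := by
  have hlast : (⟨m + 1 - 1, pf⟩ : Fin (m+1)) = Fin.last m := Fin.ext (by simp)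
  rw [Nat.card_eq_fintype_card, Fintype.card_subtype, SBP.hSB, SBP.actSB,
    Finset.filter_filter]
  congr 1
  apply Finset.filter_congr
  intro a _
  rw [hlast, SBP.lastVal]
  constructor
  · rintro ⟨h1, h2⟩
    exact ⟨fun hb => h1 ((contains2413_insert_iff π a).mpr (Or.inr hb)), h2⟩
  · rintro ⟨h1, h2⟩
    refine ⟨fun hc => ?_, h2⟩
    rcases (contains2413_insert_iff π a).mp hc with h | h
    · exact hπ h
    · exact h1 h

open SBP in
lemma cardB_SB {m : ℕ} (π : Equiv.Perm (Fin (m+1))) (hπ : ¬ Contains2413 ⇑π)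
    (pf : m + 1 - 1 < m + 1) :
    Nat.card {a : Fin (m+2) // ¬ Contains2413 (insertFun π a) ∧
      ((π ⟨m + 1 - 1, pf⟩ : Fin (m+1)) : ℕ) < (a : ℕ)} = SBP.kSB π := by
  have hlast : (⟨m + 1 - 1, pf⟩ : Fin (m+1)) = Fin.last m := Fin.ext (by simp)
  rw [Nat.card_eq_fintype_card, Fintype.card_subtype, SBP.kSB, SBP.actSB,
    Finset.filter_filter]
  congr 1
  apply Finset.filter_congr
  intro a _
  rw [hlast, SBP.lastVal]
  constructor
  · rintro ⟨h1, h2⟩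
    exact ⟨fun hb => h1 ((contains2413_insert_iff π a).mpr (Or.inr hb)), h2⟩
  · rintro ⟨h1, h2⟩
    refine ⟨fun hc => ?_, h2⟩
    rcases (contains2413_insert_iff π a).mp hc with h | h
    · exact hπ h
    · exact h1 h

open SBP in
lemma cardA_PL {m : ℕ} (π : Equiv.Perm (Fin (m+1))) (hπ : ¬ Contains2143 ⇑π)
    (pf : m + 1 - 1 < m + 1) :
    Nat.card {a : Fin (m+2) // ¬ Contains2143 (insertFun π a) ∧
      ((π ⟨m + 1 - 1, pf⟩ : Fin (m+1)) : ℕ) < (a : ℕ)} = SBP.hPL π := by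
  have hlast : (⟨m + 1 - 1, pf⟩ : Fin (m+1)) = Fin.last m := Fin.ext (by simp)
  rw [Nat.card_eq_fintype_card, Fintype.card_subtype, SBP.hPL, SBP.actPL,
    Finset.filter_filter]
  congr 1
  apply Finset.filter_congr
  intro a _
  rw [hlast, SBP.lastVal]
  constructor
  · rintro ⟨h1, h2⟩
    exact ⟨fun hb => h1 ((contains2143_insert_iff π a).mpr (Or.inr hb)), h2⟩
  · rintro ⟨h1, h2⟩
    refine ⟨fun hc => ?_, h2⟩
    rcases (contains2143_insert_iff π a).mp hc with h | h
    · exact hπ h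
    · exact h1 h

open SBP in
lemma cardB_PL {m : ℕ} (π : Equiv.Perm (Fin (m+1))) (hπ : ¬ Contains2143 ⇑π)
    (pf : m + 1 - 1 < m + 1) :
    Nat.card {a : Fin (m+2) // ¬ Contains2143 (insertFun π a) ∧
      (a : ℕ) ≤ ((π ⟨m + 1 - 1, pf⟩ : Fin (m+1)) : ℕ)} = SBP.kPL π := by
  have hlast : (⟨m + 1 - 1, pf⟩ : Fin (m+1)) = Fin.last m := Fin.ext (by simp)
  rw [Nat.card_eq_fintype_card, Fintype.card_subtype, SBP.kPL, SBP.actPL,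
    Finset.filter_filter]
  congr 1
  apply Finset.filter_congr
  intro a _
  rw [hlast, SBP.lastVal]
  constructor
  · rintro ⟨h1, h2⟩
    exact ⟨fun hb => h1 ((contains2143_insert_iff π a).mpr (Or.inr hb)), h2⟩
  · rintro ⟨h1, h2⟩
    refine ⟨fun hc => ?_, h2⟩
    rcases (contains2143_insert_iff π a).mp hc with h | h
    · exact hπ h
    · exact h1 h

lemma semiBaxterLabelCount_eq (m h k : ℕ) :
    semiBaxterLabelCount (m+1) h k = SBP.NS m h k := by
  rw [semiBaxterLabelCount]
  have hiff : ∀ π : Equiv.Perm (Fin (m+1)),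
      (IsSemiBaxter π ∧ ∃ hn : 0 < m + 1,
        h = Nat.card {a : Fin (m+2) // ¬ Contains2413 (insertFun π a) ∧
              (a : ℕ) ≤ ((π ⟨m + 1 - 1, Nat.sub_lt hn Nat.one_pos⟩ : Fin (m+1)) : ℕ)} ∧
        k = Nat.card {a : Fin (m+2) // ¬ Contains2413 (insertFun π a) ∧
              ((π ⟨m + 1 - 1, Nat.sub_lt hn Nat.one_pos⟩ : Fin (m+1)) : ℕ) < (a : ℕ)}) ↔
      (¬ Contains2413 ⇑π ∧ SBP.hSB π = h ∧ SBP.kSB π = k) := by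
    intro π
    constructor
    · rintro ⟨hsb, hn0, hh, hk⟩
      rw [cardA_SB π hsb _] at hh
      rw [cardB_SB π hsb _] at hk
      exact ⟨hsb, hh.symm, hk.symm⟩
    · rintro ⟨hsb, hh, hk⟩
      refine ⟨hsb, Nat.succ_pos m, ?_, ?_⟩
      · rw [cardA_SB π hsb _]; exact hh.symm
      · rw [cardB_SB π hsb _]; exact hk.symm
  rw [Nat.card_congr (Equiv.subtypeEquivRight hiff), Nat.card_eq_fintype_card,
    Fintype.card_subtype, SBP.NS]

lemma planeLabelCount_eq (m h k : ℕ) :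
    planeLabelCount (m+1) h k = SBP.NP m h k := by
  rw [planeLabelCount]
  have hiff : ∀ π : Equiv.Perm (Fin (m+1)),
      (IsPlane π ∧ ∃ hn : 0 < m + 1,
        h = Nat.card {a : Fin (m+2) // ¬ Contains2143 (insertFun π a) ∧
              ((π ⟨m + 1 - 1, Nat.sub_lt hn Nat.one_pos⟩ : Fin (m+1)) : ℕ) < (a : ℕ)} ∧
        k = Nat.card {a : Fin (m+2) // ¬ Contains2143 (insertFun π a) ∧
              (a : ℕ) ≤ ((π ⟨m + 1 - 1, Nat.sub_lt hn Nat.one_pos⟩ : Fin (m+1)) : ℕ)}) ↔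
      (¬ Contains2143 ⇑π ∧ SBP.hPL π = h ∧ SBP.kPL π = k) := by
    intro π
    constructor
    · rintro ⟨hsb, hn0, hh, hk⟩
      rw [cardA_PL π hsb _] at hh
      rw [cardB_PL π hsb _] at hk
      exact ⟨hsb, hh.symm, hk.symm⟩
    · rintro ⟨hsb, hh, hk⟩
      refine ⟨hsb, Nat.succ_pos m, ?_, ?_⟩
      · rw [cardA_PL π hsb _]; exact hh.symm
      · rw [cardB_PL π hsb _]; exact hk.symm
  rw [Nat.card_congr (Equiv.subtypeEquivRight hiff), Nat.card_eq_fintype_card,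
    Fintype.card_subtype, SBP.NP]

/-- Refined equinumerosity underlying Corollary 3.4: for every size and label,
semi-Baxter and plane permutations are equinumerous. -/
theorem semiBaxter_label_eq_plane_label (n h k : ℕ) (hn : 1 ≤ n) (hh : 1 ≤ h) (hk : 1 ≤ k) :
    semiBaxterLabelCount n h k = planeLabelCount n h k := by
  obtain ⟨m, rfl⟩ : ∃ m, n = m + 1 := ⟨n - 1, by omega⟩
  rw [semiBaxterLabelCount_eq, planeLabelCount_eq, SBP.NS_eq_NP]
end
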